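/- arXiv:1007.2837 — 12 statements merged into one kernel-verified Lean document; each statement's English description precedes it below -/
import Mathlib

section
/- Let 0 < χ < 1. Then the rescaled free energy F_resc[ρ] = ∫_ℝ ρ(x) log ρ(x) dx + χ ∬_{ℝ×ℝ} log|x−y| ρ(x)ρ(y) dx dy + (1/2)∫_ℝ |x|² ρ(x) dx is bounded from below uniformly over all probability densities ρ on ℝ with zero center of mass, finite second moment, finite entropy and finite interaction integral. (Logarithmic HLS inequality with quadratic confinement, one-dimensional case.) -/
open MeasureTheory Real

/-!
Young's inequality `a t ≤ a log a + eᵗ - a` (`a ≥ 0`) is used twice. With `t = -|x|²/2` it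
bounds the entropy `S` below by `1 - √(2π) - M/2`, `M` the second moment. With
`t = -l log|x - y| - |x|²/2` for `χ < l < 1`, multiplied by `ρ(y)` and integrated, it bounds
the interaction `I`: `-l I ≤ S + M/2 - 1 + √(2π) + ∫ k`, where the singular part of `eᵗ` is
dominated by the kernel `k(u) = |u|^{-l} 1_{|u| ≤ 1}`, integrable because `l < 1`. Multiplying
the second bound by `χ / l < 1` leaves a positive multiple of `S + M/2` in the free energy,
which the first bound controls.
-/

theorem Real.mul_le_mul_log_add_exp_sub {a : ℝ} (ha : 0 ≤ a) (t : ℝ) :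
    a * t ≤ a * log a + exp t - a := by
  rcases ha.eq_or_lt with rfl | ha
  · simp [(exp_pos t).le]
  · have h := add_one_le_exp (t - log a)
    rw [exp_sub, exp_log ha, le_div_iff₀ ha] at h
    linear_combination h

theorem integral_sub_integral_exp_neg_le {α : Type*} [MeasurableSpace α] {μ : Measure α}
    {ρ V : α → ℝ} (hρ0 : ∀ x, 0 ≤ ρ x) (hρ : Integrable ρ μ)
    (hS : Integrable (fun x => ρ x * log (ρ x)) μ) (hV : Integrable (fun x => V x * ρ x) μ)
    (hexp : Integrable (fun x => exp (-V x)) μ) :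
    ∫ x, ρ x ∂μ - ∫ x, exp (-V x) ∂μ ≤ ∫ x, ρ x * log (ρ x) ∂μ + ∫ x, V x * ρ x ∂μ := by
  rw [← integral_sub hρ hexp, ← integral_add hS hV]
  refine integral_mono (hρ.sub hexp) (hS.add hV) fun x => ?_
  linear_combination Real.mul_le_mul_log_add_exp_sub (hρ0 x) (-V x)

section Convolution

variable {G : Type*} [AddGroup G] [MeasurableSpace G] [MeasurableAdd₂ G] [MeasurableNeg G]
  {μ : Measure G} [SFinite μ] [μ.IsAddRightInvariant] {f g : G → ℝ}

theorem MeasureTheory.Integrable.mul_comp_sub_prod (hf : Integrable f μ) (hg : Integrable g μ) :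
    Integrable (fun p : G × G => f p.2 * g (p.1 - p.2)) (μ.prod μ) :=
  hf.convolution_integrand (ContinuousLinearMap.mul ℝ ℝ) hg

theorem integral_mul_comp_sub_prod (hf : Integrable f μ) (hg : Integrable g μ) :
    ∫ p : G × G, f p.2 * g (p.1 - p.2) ∂(μ.prod μ) = (∫ x, f x ∂μ) * ∫ x, g x ∂μ := by
  rw [integral_prod_symm _ (hf.mul_comp_sub_prod hg)]
  simp_rw [integral_const_mul, integral_sub_right_eq_self (fun x => g x), integral_mul_const]

end Convolution

section SingularKernel

variable {E : Type*} [NormedAddCommGroup E]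

noncomputable def singularKernel (l : ℝ) (u : E) : ℝ :=
  (Metric.closedBall (0 : E) 1).indicator (fun u => ‖u‖ ^ (-l)) u

theorem singularKernel_nonneg (l : ℝ) (u : E) : 0 ≤ singularKernel l u :=
  Set.indicator_nonneg (fun u _ => rpow_nonneg (norm_nonneg u) _) u

theorem integrable_singularKernel [NormedSpace ℝ E] [FiniteDimensional ℝ E]
    [MeasurableSpace E] [BorelSpace E] {l : ℝ} (hl0 : 0 ≤ l) (hl : l < Module.finrank ℝ E)
    (μ : Measure E) [μ.IsAddHaarMeasure] : Integrable (singularKernel l) μ := by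
  have hd : 1 ≤ Module.finrank ℝ E := by exact_mod_cast hl0.trans_lt hl
  have hloc : LocallyIntegrable (fun u : E => ‖u‖ ^ (-l)) μ :=
    locallyIntegrable_of_norm_le_rpow (C := 1) hd hl
      (ae_of_all _ fun u => by simp [abs_of_nonneg (rpow_nonneg (norm_nonneg u) _)])
      (measurable_norm.pow_const _).aestronglyMeasurable
  exact (integrable_indicator_iff measurableSet_closedBall).2
    (hloc.integrableOn_isCompact (isCompact_closedBall 0 1))

theorem neg_mul_log_norm_mul_le {a v l : ℝ} (ha : 0 ≤ a) (hv : 0 ≤ v) (hl : 0 ≤ l) (u : E) :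
    -(l * log ‖u‖) * a ≤ a * log a + v * a - a + exp (-v) + singularKernel l u := by
  by_cases hu : u ≠ 0 ∧ ‖u‖ ≤ 1
  · have hk : singularKernel l u = ‖u‖ ^ (-l) :=
      Set.indicator_of_mem (mem_closedBall_zero_iff.2 hu.2) _
    have hexp : exp (-(l * log ‖u‖) - v) ≤ ‖u‖ ^ (-l) := by
      rw [rpow_def_of_pos (norm_pos_iff.2 hu.1)]
      exact exp_le_exp.2 (by linarith)
    linear_combination Real.mul_le_mul_log_add_exp_sub ha (-(l * log ‖u‖) - v) + hexp
      + (exp_pos (-v)).le + hk.ge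
  · have hlog : 0 ≤ log ‖u‖ := by
      rcases eq_or_ne u 0 with rfl | hu0
      · simp
      · exact log_nonneg (not_le.1 fun h => hu ⟨hu0, h⟩).le
    linear_combination Real.mul_le_mul_log_add_exp_sub ha (-v) + singularKernel_nonneg l u
      + mul_nonneg (mul_nonneg hl hlog) ha

theorem neg_mul_integral_log_norm_sub_le [NormedSpace ℝ E] [FiniteDimensional ℝ E] [MeasurableSpace E] [BorelSpace E] {μ : Measure E}
    [μ.IsAddHaarMeasure] {ρ V : E → ℝ} {l : ℝ} (hl0 : 0 ≤ l) (hl : l < Module.finrank ℝ E)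
    (hρ0 : ∀ x, 0 ≤ ρ x) (hρ : Integrable ρ μ) (hρ1 : ∫ x, ρ x ∂μ = 1)
    (hS : Integrable (fun x => ρ x * log (ρ x)) μ) (hV0 : ∀ x, 0 ≤ V x)
    (hV : Integrable (fun x => V x * ρ x) μ) (hexp : Integrable (fun x => exp (-V x)) μ)
    (hI : Integrable (fun p : E × E => log ‖p.1 - p.2‖ * ρ p.1 * ρ p.2) (μ.prod μ)) :
    -(l * ∫ p : E × E, log ‖p.1 - p.2‖ * ρ p.1 * ρ p.2 ∂(μ.prod μ)) ≤
      ∫ x, ρ x * log (ρ x) ∂μ + ∫ x, V x * ρ x ∂μ - 1 + ∫ x, exp (-V x) ∂μ +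
        ∫ u, singularKernel l u ∂μ := by
  set g : E → ℝ := fun x => ρ x * log (ρ x) + V x * ρ x - ρ x + exp (-V x)
  have hg : Integrable g μ := ((hS.add hV).sub hρ).add hexp
  have hk := integrable_singularKernel hl0 hl μ
  have hgρ := hg.mul_prod hρ
  have hρk := hρ.mul_comp_sub_prod hk
  have hpointwise : ∀ p : E × E, -(l * (log ‖p.1 - p.2‖ * ρ p.1 * ρ p.2)) ≤
      g p.1 * ρ p.2 + ρ p.2 * singularKernel l (p.1 - p.2) := fun p => by
    linear_combination mul_le_mul_of_nonneg_left
      (neg_mul_log_norm_mul_le (hρ0 p.1) (hV0 p.1) hl0 (p.1 - p.2)) (hρ0 p.2)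
  have hg_int : ∫ x, g x ∂μ =
      ∫ x, ρ x * log (ρ x) ∂μ + ∫ x, V x * ρ x ∂μ - 1 + ∫ x, exp (-V x) ∂μ := by
    rw [integral_add (f := fun x => ρ x * log (ρ x) + V x * ρ x - ρ x) ((hS.add hV).sub hρ) hexp,
      integral_sub (f := fun x => ρ x * log (ρ x) + V x * ρ x) (hS.add hV) hρ,
      integral_add hS hV, hρ1]
  calc -(l * ∫ p : E × E, log ‖p.1 - p.2‖ * ρ p.1 * ρ p.2 ∂(μ.prod μ))
      = ∫ p : E × E, -(l * (log ‖p.1 - p.2‖ * ρ p.1 * ρ p.2)) ∂(μ.prod μ) := by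
        rw [integral_neg, integral_const_mul]
    _ ≤ ∫ p : E × E, (g p.1 * ρ p.2 + ρ p.2 * singularKernel l (p.1 - p.2)) ∂(μ.prod μ) :=
        integral_mono (hI.const_mul l).neg (hgρ.add hρk) hpointwise
    _ = _ := by
        rw [integral_add hgρ hρk, integral_prod_mul, integral_mul_comp_sub_prod hρ hk, hρ1,
          hg_int, mul_one, one_mul]

end SingularKernel

/-- Logarithmic HLS inequality with quadratic confinement in one dimension:
for `0 < χ < 1`, the rescaled free energy
`F_resc[ρ] = ∫ ρ log ρ + χ ∬ log|x−y| ρ(x)ρ(y) + (1/2) ∫ |x|² ρ`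
is bounded from below uniformly over all zero-center-of-mass probability
densities with finite second moment, entropy and interaction integral. -/
theorem logHLS_with_confinement (χ : ℝ) (hχ0 : 0 < χ) (hχ1 : χ < 1) :
    ∃ C : ℝ, ∀ ρ : ℝ → ℝ,
      (∀ x, 0 ≤ ρ x) →
      (∫ x : ℝ, ρ x) = 1 →
      (∫ x : ℝ, x * ρ x) = 0 →
      Integrable (fun x : ℝ => x ^ 2 * ρ x) →
      Integrable (fun x : ℝ => ρ x * Real.log (ρ x)) →
      Integrable (fun p : ℝ × ℝ => Real.log |p.1 - p.2| * ρ p.1 * ρ p.2) →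
      C ≤ (∫ x : ℝ, ρ x * Real.log (ρ x)) +
            χ * (∫ p : ℝ × ℝ, Real.log |p.1 - p.2| * ρ p.1 * ρ p.2) +
            (1 / 2) * ∫ x : ℝ, x ^ 2 * ρ x := by
  obtain ⟨l, hχl, hl1⟩ := exists_between hχ1
  have hl0 : 0 < l := hχ0.trans hχl
  -- `set` pins one elaboration of the Gaussian integral; elaborating it inside the constant
  -- below picks a different (defeq) `NormedSpace ℝ ℝ` instance, which `linear_combination` misses.
  set G : ℝ := ∫ x : ℝ, exp (-(1 / 2 * x ^ 2)) with hG
  refine ⟨1 - G - χ / l * ∫ u : ℝ, singularKernel l u, fun ρ hρ0 hρ1 _ hM hS hI => ?_⟩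
  have hρ : Integrable ρ := .of_integral_ne_zero (by simp [hρ1])
  have hV : Integrable (fun x : ℝ => 1 / 2 * x ^ 2 * ρ x) := by
    simpa only [mul_assoc] using hM.const_mul (1 / 2)
  have hVρ : ∫ x : ℝ, 1 / 2 * x ^ 2 * ρ x = 1 / 2 * ∫ x : ℝ, x ^ 2 * ρ x := by
    simp only [mul_assoc, integral_const_mul]
  have hgauss : Integrable (fun x : ℝ => exp (-(1 / 2 * x ^ 2))) := by
    simpa only [neg_mul] using integrable_exp_neg_mul_sq (b := 1 / 2) (by norm_num)
  have hentropy := integral_sub_integral_exp_neg_le hρ0 hρ hS hV hgauss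
  have hinteraction := neg_mul_integral_log_norm_sub_le hl0.le (by simpa using hl1) hρ0 hρ hρ1
    hS (fun x => by positivity) hV hgauss (by simpa [← Measure.volume_eq_prod] using hI)
  simp only [Real.norm_eq_abs, ← Measure.volume_eq_prod, hVρ, hρ1, ← hG] at hentropy hinteraction
  have hχI : χ * ∫ p : ℝ × ℝ, log |p.1 - p.2| * ρ p.1 * ρ p.2 =
      χ / l * (l * ∫ p : ℝ × ℝ, log |p.1 - p.2| * ρ p.1 * ρ p.2) := by field_simp
  have hβ1 : χ / l ≤ 1 := (div_le_one hl0).2 hχl.le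
  linear_combination -hχI + mul_le_mul_of_nonneg_left hinteraction (div_pos hχ0 hl0).le +
    mul_le_mul_of_nonneg_left hentropy (sub_nonneg.2 hβ1)
end

section
/- Let γ > 0 and let u, v, α, β be positive real numbers. Then α·((u+v)/2)^{−γ} − β·((u+v)/2)^{γ} ≤ (α+β)·(u^{−γ} + v^{−γ})/2 − 2β, and equality holds if and only if u = v = 1. -/
open Real

/-- Midpoint convexity of `x ↦ x^(-γ)` on positives, with strictness. -/
lemma aux_conv (γ u v : ℝ) (hγ : 0 < γ) (hu : 0 < u) (hv : 0 < v) :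
    ((u + v) / 2) ^ (-γ) ≤ (u ^ (-γ) + v ^ (-γ)) / 2 ∧
      (u ≠ v → ((u + v) / 2) ^ (-γ) < (u ^ (-γ) + v ^ (-γ)) / 2) := by
  have hm : (0:ℝ) < (u + v) / 2 := by positivity
  have hsu := Real.sq_sqrt hu.le
  have hsv := Real.sq_sqrt hv.le
  have hmul : Real.sqrt (u * v) = Real.sqrt u * Real.sqrt v := Real.sqrt_mul hu.le v
  have hkey : (Real.sqrt (u * v)) ^ (-γ) = Real.sqrt (u ^ (-γ) * v ^ (-γ)) := by
    rw [Real.sqrt_eq_rpow, Real.sqrt_eq_rpow, ← Real.mul_rpow hu.le hv.le,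
      ← Real.rpow_mul (by positivity : (0:ℝ) ≤ u * v),
      ← Real.rpow_mul (by positivity : (0:ℝ) ≤ u * v)]
    ring_nf
  have hpos : (0:ℝ) < Real.sqrt (u * v) := Real.sqrt_pos.mpr (by positivity)
  -- AM-GM on a, b
  have ha : (0:ℝ) < u ^ (-γ) := by positivity
  have hb : (0:ℝ) < v ^ (-γ) := by positivity
  have hsa := Real.sq_sqrt ha.le
  have hsb := Real.sq_sqrt hb.le
  have hgm : Real.sqrt (u ^ (-γ) * v ^ (-γ)) ≤ (u ^ (-γ) + v ^ (-γ)) / 2 := by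
    rw [Real.sqrt_mul ha.le]
    nlinarith [sq_nonneg (Real.sqrt (u ^ (-γ)) - Real.sqrt (v ^ (-γ)))]
  have hamgm : Real.sqrt (u * v) ≤ (u + v) / 2 := by
    rw [hmul]; nlinarith [sq_nonneg (Real.sqrt u - Real.sqrt v)]
  constructor
  · calc ((u + v) / 2) ^ (-γ) ≤ (Real.sqrt (u * v)) ^ (-γ) :=
          Real.rpow_le_rpow_of_nonpos hpos hamgm (by linarith)
      _ = Real.sqrt (u ^ (-γ) * v ^ (-γ)) := hkey
      _ ≤ (u ^ (-γ) + v ^ (-γ)) / 2 := hgm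
  · intro hne
    have hsne : Real.sqrt u ≠ Real.sqrt v := fun h => hne (by rw [← hsu, ← hsv, h])
    have hstrict : Real.sqrt (u * v) < (u + v) / 2 := by
      rw [hmul]
      have := sq_nonneg (Real.sqrt u - Real.sqrt v)
      have h2 : (Real.sqrt u - Real.sqrt v) ^ 2 ≠ 0 := pow_ne_zero _ (sub_ne_zero.mpr hsne)
      nlinarith [lt_of_le_of_ne this (Ne.symm h2)]
    calc ((u + v) / 2) ^ (-γ) < (Real.sqrt (u * v)) ^ (-γ) :=
          Real.rpow_lt_rpow_of_neg hpos hstrict (by linarith)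
      _ = Real.sqrt (u ^ (-γ) * v ^ (-γ)) := hkey
      _ ≤ (u ^ (-γ) + v ^ (-γ)) / 2 := hgm

/-- `t + t⁻¹ ≥ 2` for positive `t`, via rpow. -/
lemma aux_two (γ m : ℝ) (hγ : 0 < γ) (hm : 0 < m) :
    2 ≤ m ^ γ + m ^ (-γ) ∧ (m ^ γ + m ^ (-γ) = 2 → m = 1) := by
  have ht : (0:ℝ) < m ^ γ := by positivity
  have hinv : m ^ (-γ) = (m ^ γ)⁻¹ := by rw [Real.rpow_neg hm.le]
  constructor
  · rw [hinv]
    rw [← sub_nonneg]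
    have : m ^ γ + (m ^ γ)⁻¹ - 2 = (m ^ γ - 1) ^ 2 / (m ^ γ) := by
      field_simp; ring
    rw [this]; positivity
  · intro h
    rw [hinv] at h
    have h1 : (m ^ γ - 1) ^ 2 = 0 := by
      field_simp at h
      nlinarith
    have h2 : m ^ γ = 1 := by nlinarith [sq_nonneg (m ^ γ - 1)]
    rcases lt_trichotomy m 1 with hlt | heq | hgt
    · exact absurd h2 (ne_of_lt (Real.rpow_lt_one hm.le hlt hγ))
    · exact heq
    · exact absurd h2 (ne_of_gt ((Real.one_lt_rpow_iff_of_pos hm).mpr (Or.inl ⟨hgt, hγ⟩)))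

/-- Convex-like pointwise inequality (Lemma on Jensen-type quadratic
inequalities): for `γ > 0` and positive `u, v, α, β`,
`α ((u+v)/2)^{-γ} − β ((u+v)/2)^{γ} ≤ (α+β)(u^{-γ}+v^{-γ})/2 − 2β`,
with equality iff `u = v = 1`. -/
theorem convexlike_jensen_pointwise (γ u v α β : ℝ)
    (hγ : 0 < γ) (hu : 0 < u) (hv : 0 < v) (hα : 0 < α) (hβ : 0 < β) :
    α * ((u + v) / 2) ^ (-γ) - β * ((u + v) / 2) ^ γ ≤
      (α + β) * ((u ^ (-γ) + v ^ (-γ)) / 2) - 2 * β ∧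
    (α * ((u + v) / 2) ^ (-γ) - β * ((u + v) / 2) ^ γ =
        (α + β) * ((u ^ (-γ) + v ^ (-γ)) / 2) - 2 * β ↔ u = 1 ∧ v = 1) := by
  obtain ⟨hc, hcs⟩ := aux_conv γ u v hγ hu hv
  obtain ⟨h2, h2e⟩ := aux_two γ ((u + v) / 2) hγ (by positivity)
  have k1 : 0 ≤ α * ((u ^ (-γ) + v ^ (-γ)) / 2 - ((u + v) / 2) ^ (-γ)) :=
    mul_nonneg hα.le (by linarith)
  have k2 : 0 ≤ β * ((u ^ (-γ) + v ^ (-γ)) / 2 - ((u + v) / 2) ^ (-γ)) :=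
    mul_nonneg hβ.le (by linarith)
  have k3 : 0 ≤ β * (((u + v) / 2) ^ γ + ((u + v) / 2) ^ (-γ) - 2) :=
    mul_nonneg hβ.le (by linarith)
  refine ⟨by nlinarith, ?_, ?_⟩
  · intro heq
    have huv : u = v := by
      by_contra hne
      have hlt := hcs hne
      have : 0 < α * ((u ^ (-γ) + v ^ (-γ)) / 2 - ((u + v) / 2) ^ (-γ)) :=
        mul_pos hα (by linarith)
      nlinarith
    subst huv
    have huu : (u + u) / 2 = u := by ring
    rw [huu] at heq
    obtain ⟨_, h2u⟩ := aux_two γ u hγ hu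
    have : u ^ γ + u ^ (-γ) = 2 := by
      have hβ' : β ≠ 0 := ne_of_gt hβ
      field_simp at heq
      nlinarith
    exact ⟨h2u this, h2u this⟩
  · rintro ⟨rfl, rfl⟩
    norm_num
    ring
end

section
/- Let γ > 0 and α, β > 0. Let u : (0,1) → (0,∞) be measurable with ∫_0^1 u(t) dt finite and positive and ∫_0^1 u(t)^{−γ} dt finite. Then α·(∫_0^1 u(t) dt)^{−γ} − β·(∫_0^1 u(t) dt)^{γ} ≤ (α+β)·∫_0^1 u(t)^{−γ} dt − 2β. (Continuous version of the convex-like Jensen inequality.) -/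
open MeasureTheory Real

/-! Integrating the tangent line of the convex function `x ↦ x ^ (-γ)` at `I = ∫ u` gives Jensen's
inequality `I ^ (-γ) ≤ ∫ u ^ (-γ)`, which bounds the `α`-term. For the `β`-term,
`I ^ γ + I ^ (-γ) = 2 cosh (γ log I) ≥ 2`, so `2 - I ^ γ ≤ I ^ (-γ) ≤ ∫ u ^ (-γ)`. -/

lemma one_sub_mul_sub_one_le_rpow_neg {γ y : ℝ} (hγ : 0 ≤ γ) (hy : 0 < y) :
    1 - γ * (y - 1) ≤ y ^ (-γ) := by
  calc 1 - γ * (y - 1) ≤ -γ * log y + 1 := by nlinarith [log_le_sub_one_of_pos hy]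
    _ ≤ exp (-γ * log y) := add_one_le_exp _
    _ = y ^ (-γ) := by rw [rpow_def_of_pos hy, mul_comm]

lemma rpow_neg_tangent_le {γ a x : ℝ} (hγ : 0 ≤ γ) (ha : 0 < a) (hx : 0 < x) :
    a ^ (-γ) * (1 - γ * (x / a - 1)) ≤ x ^ (-γ) := by
  calc a ^ (-γ) * (1 - γ * (x / a - 1)) ≤ a ^ (-γ) * (x / a) ^ (-γ) := by
        gcongr; exact one_sub_mul_sub_one_le_rpow_neg hγ (div_pos hx ha)
    _ = x ^ (-γ) := by
        rw [div_rpow hx.le ha.le]; field_simp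

lemma two_le_rpow_add_rpow_neg {x : ℝ} (hx : 0 < x) (γ : ℝ) : 2 ≤ x ^ γ + x ^ (-γ) := by
  have h := one_le_cosh (log x * γ)
  rw [cosh_eq, ← mul_neg] at h
  rw [rpow_def_of_pos hx, rpow_def_of_pos hx]
  linarith

theorem rpow_neg_integral_le_integral_rpow_neg {Ω : Type*} [MeasurableSpace Ω] {μ : Measure Ω}
    [IsProbabilityMeasure μ] {γ : ℝ} {u : Ω → ℝ} (hγ : 0 ≤ γ) (hu : ∀ᵐ ω ∂μ, 0 < u ω)
    (hint : Integrable u μ) (hpos : 0 < ∫ ω, u ω ∂μ)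
    (hinv : Integrable (fun ω => u ω ^ (-γ)) μ) :
    (∫ ω, u ω ∂μ) ^ (-γ) ≤ ∫ ω, u ω ^ (-γ) ∂μ := by
  set I := ∫ ω, u ω ∂μ
  have htangent : ∀ ω, I ^ (-γ) * (1 - γ * (u ω / I - 1)) =
      I ^ (-γ) * (1 + γ) - I ^ (-γ) * γ / I * u ω := fun ω => by field_simp; ring
  calc I ^ (-γ) = ∫ ω, I ^ (-γ) * (1 - γ * (u ω / I - 1)) ∂μ := by
        simp_rw [htangent]
        rw [integral_sub (integrable_const _) (hint.const_mul _), integral_const,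
          integral_const_mul, probReal_univ, one_smul]
        field_simp; ring
    _ ≤ ∫ ω, u ω ^ (-γ) ∂μ := by
        refine integral_mono_ae ?_ hinv ?_
        · simp_rw [htangent]; exact (integrable_const _).sub (hint.const_mul _)
        · filter_upwards [hu] with ω hω using rpow_neg_tangent_le hγ hpos hω

theorem convexlike_jensen_integral_general (γ α β : ℝ)
    (hγ : 0 < γ) (hα : 0 < α) (hβ : 0 < β)
    (u : ℝ → ℝ)
    (hupos : ∀ t ∈ Set.Ioo (0 : ℝ) 1, 0 < u t)
    (huint : IntegrableOn u (Set.Ioo (0 : ℝ) 1))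
    (hIpos : 0 < ∫ t in Set.Ioo (0 : ℝ) 1, u t)
    (huinv : IntegrableOn (fun t => u t ^ (-γ)) (Set.Ioo (0 : ℝ) 1)) :
    α * (∫ t in Set.Ioo (0 : ℝ) 1, u t) ^ (-γ) -
        β * (∫ t in Set.Ioo (0 : ℝ) 1, u t) ^ γ ≤
      (α + β) * (∫ t in Set.Ioo (0 : ℝ) 1, u t ^ (-γ)) - 2 * β := by
  have : IsProbabilityMeasure (volume.restrict (Set.Ioo (0 : ℝ) 1)) := ⟨by simp⟩
  have hjensen := rpow_neg_integral_le_integral_rpow_neg hγ.le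
    ((ae_restrict_iff' measurableSet_Ioo).2 (.of_forall hupos)) huint hIpos huinv
  have hamgm := two_le_rpow_add_rpow_neg hIpos γ
  linarith [mul_le_mul_of_nonneg_left hjensen (add_pos hα hβ).le,
    mul_le_mul_of_nonneg_left hamgm hβ.le]

/-- Continuous version of the convex-like Jensen inequality: for `γ > 0`,
`α, β > 0` and a measurable positive `u : (0,1) → (0,∞)` with
`∫₀¹ u` finite and positive and `∫₀¹ u^{-γ}` finite,
`α (∫₀¹ u)^{-γ} − β (∫₀¹ u)^{γ} ≤ (α+β) ∫₀¹ u^{-γ} − 2β`. -/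
theorem convexlike_jensen_integral (γ α β : ℝ)
    (hγ : 0 < γ) (hα : 0 < α) (hβ : 0 < β)
    (u : ℝ → ℝ) (hmeas : Measurable u)
    (hupos : ∀ t ∈ Set.Ioo (0 : ℝ) 1, 0 < u t)
    (huint : IntegrableOn u (Set.Ioo (0 : ℝ) 1))
    (hIpos : 0 < ∫ t in Set.Ioo (0 : ℝ) 1, u t)
    (huinv : IntegrableOn (fun t => u t ^ (-γ)) (Set.Ioo (0 : ℝ) 1)) :
    α * (∫ t in Set.Ioo (0 : ℝ) 1, u t) ^ (-γ) -
        β * (∫ t in Set.Ioo (0 : ℝ) 1, u t) ^ γ ≤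
      (α + β) * (∫ t in Set.Ioo (0 : ℝ) 1, u t ^ (-γ)) - 2 * β :=
  convexlike_jensen_integral_general γ α β hγ hα hβ u hupos huint hIpos huinv
end

section
/- Let u, v, α, β be positive real numbers. Then α·log((u+v)/2) + β·((u+v)/2)² ≥ (α+2β)·(log u + log v)/2 + β, and equality holds if and only if u = v = 1. (Convex-like inequality replacing Jensen's inequality in the proof of the logarithmic HLS inequality with quadratic confinement.) -/
open Real

/-- Convex-like inequality with logarithm and quadratic confinement: for
positive `u, v, α, β`,
`α log((u+v)/2) + β ((u+v)/2)² ≥ (α+2β)(log u + log v)/2 + β`,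
with equality iff `u = v = 1`. -/
theorem convexlike_log_quadratic (u v α β : ℝ)
    (hu : 0 < u) (hv : 0 < v) (hα : 0 < α) (hβ : 0 < β) :
    α * Real.log ((u + v) / 2) + β * ((u + v) / 2) ^ 2 ≥
      (α + 2 * β) * ((Real.log u + Real.log v) / 2) + β ∧
    (α * Real.log ((u + v) / 2) + β * ((u + v) / 2) ^ 2 =
        (α + 2 * β) * ((Real.log u + Real.log v) / 2) + β ↔ u = 1 ∧ v = 1) := by
  set m : ℝ := (u + v) / 2 with hm
  have hm0 : 0 < m := by positivity
  have hsq : u * v ≤ m ^ 2 := by nlinarith [sq_nonneg (u - v)]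
  -- log u + log v ≤ 2 log m
  have h1 : Real.log u + Real.log v ≤ 2 * Real.log m := by
    have := Real.log_le_log (by positivity) hsq
    rwa [Real.log_mul hu.ne' hv.ne', Real.log_pow, Nat.cast_ofNat] at this
  -- 2 log m ≤ m^2 - 1
  have h2 : 2 * Real.log m ≤ m ^ 2 - 1 := by
    have := Real.log_le_sub_one_of_pos (show (0:ℝ) < m ^ 2 by positivity)
    rwa [Real.log_pow, Nat.cast_ofNat] at this
  refine ⟨by nlinarith [mul_nonneg hα.le (sub_nonneg.2 h1),
      mul_nonneg hβ.le (sub_nonneg.2 h1), mul_nonneg hβ.le (sub_nonneg.2 h2)], ?_, ?_⟩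
  · intro heq
    have e1 : Real.log u + Real.log v = 2 * Real.log m := by
      nlinarith [mul_nonneg hβ.le (sub_nonneg.2 h2)]
    have e2 : 2 * Real.log m = m ^ 2 - 1 := by
      nlinarith [mul_nonneg hα.le (sub_nonneg.2 h1), mul_nonneg hβ.le (sub_nonneg.2 h1)]
    -- from e1: u*v = m^2, hence u = v
    have huv : u * v = m ^ 2 := by
      have : Real.log (u * v) = Real.log (m ^ 2) := by
        rw [Real.log_mul hu.ne' hv.ne', Real.log_pow, Nat.cast_ofNat, e1]
      exact Real.log_injOn_pos (by simp [Set.mem_Ioi]; positivity)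
        (by simp [Set.mem_Ioi]; positivity) this
    have huveq : u = v := by nlinarith [sq_nonneg (u - v)]
    -- then m = u and m^2 = 1
    have hmu : m = u := by rw [hm, huveq]; ring
    have hm1 : m = 1 := by
      by_contra h
      have hne : m ^ 2 ≠ 1 := fun hc => h (by nlinarith)
      have := Real.log_lt_sub_one_of_pos (show (0:ℝ) < m ^ 2 by positivity) hne
      rw [Real.log_pow, Nat.cast_ofNat] at this
      linarith
    constructor <;> [skip; rw [← huveq]] <;> rw [← hmu, hm1]
  · rintro ⟨rfl, rfl⟩
    norm_num
end

section
/- Let μ(x) = 1/(π(1+x²)) for x ∈ ℝ. Then for every p ∈ ℝ, μ(p) = ∫_ℝ ∫_0^1 μ(p − t q) · μ(p − t q + q) dt dq. (Characterization identity for the critical profile of the one-dimensional modified Keller–Segel equation.) -/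
open MeasureTheory Real

/-- The critical profile `μ(x) = 1/(π(1+x²))` (Cauchy density). -/
noncomputable def cauchyProfile (x : ℝ) : ℝ := 1 / (π * (1 + x ^ 2))

/-!
For fixed `t ∈ (0, 1)` the two factors `q ↦ μ(p - t q)` and `q ↦ μ(p + (1 - t) q)` are multiples
of Cauchy densities in `q`, of scales `1/t` and `1/(1 - t)`, so the inner integral over `q` is a
value of the convolution of two Cauchy densities. Scales add under convolution and
`1/t + 1/(1 - t) = 1/(t(1 - t))`, which makes that value exactly `μ(p)` for almost every `t`;
exchanging the two integrals (Fubini) gives the identity. The convolution of Cauchy densities is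
computed from an explicit partial-fraction primitive.
-/

open Filter Topology Bornology Set ProbabilityTheory
open scoped NNReal

lemma tendsto_log_sq_add_sq_sub_log_sq_add_sq (c d m : ℝ) :
    Tendsto (fun x => log (x ^ 2 + c ^ 2) - log ((x - m) ^ 2 + d ^ 2)) (cobounded ℝ) (𝓝 0) := by
  have hratio : Tendsto (fun x : ℝ => (x ^ 2 + c ^ 2) / ((x - m) ^ 2 + d ^ 2))
      (cobounded ℝ) (𝓝 1) := by
    -- the same ratio, written in the variable `y = x⁻¹`
    have hcont : ContinuousAt
        (fun y : ℝ => (1 + c ^ 2 * y ^ 2) / ((1 - m * y) ^ 2 + d ^ 2 * y ^ 2)) 0 :=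
      ContinuousAt.div (by fun_prop) (by fun_prop) (by norm_num)
    have h := hcont.tendsto.comp tendsto_inv₀_cobounded
    simp only [zero_pow two_ne_zero, mul_zero, add_zero, sub_zero, one_pow, div_one] at h
    refine h.congr' ?_
    filter_upwards [eventually_ne_cobounded 0] with x hx
    rw [Function.comp_apply, ← mul_div_mul_left _ _ (pow_ne_zero 2 hx)]
    congr 1 <;> field_simp
  have h := (continuousAt_log one_ne_zero).tendsto.comp hratio
  rw [log_one] at h
  refine h.congr' ?_
  filter_upwards [eventually_ne_cobounded 0, eventually_ne_cobounded m] with x hx hxm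
  have hxm' : x - m ≠ 0 := sub_ne_zero.2 hxm
  rw [Function.comp_apply, log_div (by positivity) (by positivity)]

lemma tendsto_arctan_sub_div_atTop (m : ℝ) {d : ℝ} (hd : 0 < d) :
    Tendsto (fun x => arctan ((x - m) / d)) atTop (𝓝 (π / 2)) :=
  (tendsto_arctan_atTop.mono_right nhdsWithin_le_nhds).comp
    ((tendsto_atTop_add_const_right _ (-m) tendsto_id).atTop_div_const hd)

lemma tendsto_arctan_sub_div_atBot (m : ℝ) {d : ℝ} (hd : 0 < d) :
    Tendsto (fun x => arctan ((x - m) / d)) atBot (𝓝 (-(π / 2))) :=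
  (tendsto_arctan_atBot.mono_right nhdsWithin_le_nhds).comp
    ((tendsto_atBot_add_const_right _ (-m) tendsto_id).atBot_div_const hd)

/-- Partial-fraction primitive of `x ↦ ((x² + c²)((x - m)² + d²))⁻¹`; for `c, d > 0` its
denominator vanishes only when `c = d` and `m = 0`. -/
noncomputable def cauchyProductPrimitive (c d m x : ℝ) : ℝ :=
  (m * (log (x ^ 2 + c ^ 2) - log ((x - m) ^ 2 + d ^ 2))
      + (d ^ 2 - c ^ 2 + m ^ 2) / c * arctan (x / c)
      + (c ^ 2 - d ^ 2 + m ^ 2) / d * arctan ((x - m) / d))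
    / (((c + d) ^ 2 + m ^ 2) * ((c - d) ^ 2 + m ^ 2))

section CauchyProductPrimitive

variable {c d m : ℝ} (hc : 0 < c) (hd : 0 < d) (hN : (c - d) ^ 2 + m ^ 2 ≠ 0)
include hc hd hN

lemma hasDerivAt_cauchyProductPrimitive (x : ℝ) :
    HasDerivAt (cauchyProductPrimitive c d m) ((x ^ 2 + c ^ 2) * ((x - m) ^ 2 + d ^ 2))⁻¹ x := by
  have h₁ : x ^ 2 + c ^ 2 ≠ 0 := by positivity
  have h₂ : (x - m) ^ 2 + d ^ 2 ≠ 0 := by positivity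
  have hlog₁ : HasDerivAt (fun y => log (y ^ 2 + c ^ 2)) (2 * x / (x ^ 2 + c ^ 2)) x := by
    simpa using ((hasDerivAt_pow 2 x).add_const (c ^ 2)).log h₁
  have hlog₂ : HasDerivAt (fun y => log ((y - m) ^ 2 + d ^ 2))
      (2 * (x - m) / ((x - m) ^ 2 + d ^ 2)) x := by
    simpa using ((((hasDerivAt_id' x).sub_const m).pow 2).add_const (d ^ 2)).log h₂
  have harctan₁ : HasDerivAt (fun y => arctan (y / c)) (c / (x ^ 2 + c ^ 2)) x := by
    convert ((hasDerivAt_id' x).div_const c).arctan using 1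
    field_simp
    ring
  have harctan₂ : HasDerivAt (fun y => arctan ((y - m) / d)) (d / ((x - m) ^ 2 + d ^ 2)) x := by
    convert (((hasDerivAt_id' x).sub_const m).div_const d).arctan using 1
    field_simp
    ring
  have h := (((hlog₁.sub hlog₂).const_mul m).add
    (harctan₁.const_mul ((d ^ 2 - c ^ 2 + m ^ 2) / c))).add
      (harctan₂.const_mul ((c ^ 2 - d ^ 2 + m ^ 2) / d))
    |>.div_const (((c + d) ^ 2 + m ^ 2) * ((c - d) ^ 2 + m ^ 2))
  refine h.congr_deriv ?_
  field_simp
  ring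

lemma tendsto_cauchyProductPrimitive {l : Filter ℝ} (hl : l ≤ cobounded ℝ) {s : ℝ}
    (hs₁ : Tendsto (fun x => arctan (x / c)) l (𝓝 s))
    (hs₂ : Tendsto (fun x => arctan ((x - m) / d)) l (𝓝 s)) :
    Tendsto (cauchyProductPrimitive c d m) l
      (𝓝 (s * (c + d) / (c * d * ((c + d) ^ 2 + m ^ 2)))) := by
  have h := ((((tendsto_log_sq_add_sq_sub_log_sq_add_sq c d m).mono_left hl).const_mul m).add
    (hs₁.const_mul ((d ^ 2 - c ^ 2 + m ^ 2) / c))).add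
      (hs₂.const_mul ((c ^ 2 - d ^ 2 + m ^ 2) / d))
    |>.div_const (((c + d) ^ 2 + m ^ 2) * ((c - d) ^ 2 + m ^ 2))
  unfold cauchyProductPrimitive
  convert h using 2
  field_simp
  ring

end CauchyProductPrimitive

lemma integrable_inv_sq_add_sq_mul_inv_sq_add_sq {c d : ℝ} (hc : 0 < c) (hd : 0 < d) (m : ℝ) :
    Integrable fun x : ℝ => ((x ^ 2 + c ^ 2) * ((x - m) ^ 2 + d ^ 2))⁻¹ := by
  have hfst : Integrable fun x : ℝ => (x ^ 2 + c ^ 2)⁻¹ := by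
    convert (integrable_inv_one_add_sq.comp_div hc.ne').const_mul (c ^ 2)⁻¹ using 2 with x
    field_simp
    ring
  simp_rw [mul_inv]
  refine hfst.mul_bdd (c := (d ^ 2)⁻¹) (by fun_prop) (ae_of_all _ fun x => ?_)
  rw [norm_inv, Real.norm_of_nonneg (by positivity)]
  exact inv_anti₀ (by positivity) (le_add_of_nonneg_left (sq_nonneg _))

lemma integral_inv_sq_add_sq_mul_inv_sq_add_sq {c d m : ℝ} (hc : 0 < c) (hd : 0 < d)
    (hcdm : c ≠ d ∨ m ≠ 0) :
    ∫ x : ℝ, ((x ^ 2 + c ^ 2) * ((x - m) ^ 2 + d ^ 2))⁻¹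
      = π * (c + d) / (c * d * ((c + d) ^ 2 + m ^ 2)) := by
  have hN : (c - d) ^ 2 + m ^ 2 ≠ 0 := by
    rcases hcdm with h | h
    · have := sub_ne_zero.2 h
      positivity
    · positivity
  have hbot := tendsto_cauchyProductPrimitive hc hd hN IsOrderBornology.atBot_le_cobounded
    (by simpa using tendsto_arctan_sub_div_atBot 0 hc) (tendsto_arctan_sub_div_atBot m hd)
  have htop := tendsto_cauchyProductPrimitive hc hd hN IsOrderBornology.atTop_le_cobounded
    (by simpa using tendsto_arctan_sub_div_atTop 0 hc) (tendsto_arctan_sub_div_atTop m hd)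
  rw [integral_of_hasDerivAt_of_tendsto (hasDerivAt_cauchyProductPrimitive hc hd hN)
    (integrable_inv_sq_add_sq_mul_inv_sq_add_sq hc hd m) hbot htop]
  ring

lemma cauchyPDFReal_mul_cauchyPDFReal (a b : ℝ) (γ δ : ℝ≥0) (x : ℝ) :
    cauchyPDFReal a γ x * cauchyPDFReal b δ x
      = π⁻¹ ^ 2 * γ * δ * (((x - a) ^ 2 + γ ^ 2) * ((x - a - (b - a)) ^ 2 + δ ^ 2))⁻¹ := by
  rw [cauchyPDFReal_def, cauchyPDFReal_def, sub_sub_sub_cancel_right, mul_inv]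
  ring

lemma integrable_cauchyPDFReal_mul_cauchyPDFReal (a b : ℝ) {γ δ : ℝ≥0} (hγ : γ ≠ 0)
    (hδ : δ ≠ 0) : Integrable fun x => cauchyPDFReal a γ x * cauchyPDFReal b δ x := by
  simp_rw [cauchyPDFReal_mul_cauchyPDFReal]
  exact ((integrable_inv_sq_add_sq_mul_inv_sq_add_sq (by positivity) (by positivity)
    (b - a)).comp_sub_right a).const_mul _

/-- The semigroup law `f_{a,γ} ⋆ f_{0,δ} = f_{a,γ+δ}` of Cauchy densities, evaluated at `b`. -/
lemma integral_cauchyPDFReal_mul_cauchyPDFReal {a b : ℝ} {γ δ : ℝ≥0} (hγ : γ ≠ 0) (hδ : δ ≠ 0)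
    (h : γ ≠ δ ∨ a ≠ b) :
    ∫ x, cauchyPDFReal a γ x * cauchyPDFReal b δ x = cauchyPDFReal a (γ + δ) b := by
  have hcdm : (γ : ℝ) ≠ δ ∨ b - a ≠ 0 := h.imp NNReal.coe_injective.ne (sub_ne_zero.2 ·.symm)
  have hγ' : (γ : ℝ) ≠ 0 := by positivity
  have hδ' : (δ : ℝ) ≠ 0 := by positivity
  simp_rw [cauchyPDFReal_mul_cauchyPDFReal]
  rw [integral_const_mul, integral_sub_right_eq_self
      (fun x => ((x ^ 2 + γ ^ 2) * ((x - (b - a)) ^ 2 + δ ^ 2))⁻¹),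
    integral_inv_sq_add_sq_mul_inv_sq_add_sq (by positivity) (by positivity) hcdm,
    cauchyPDFReal_def, NNReal.coe_add]
  field_simp
  ring

lemma cauchyProfile_neg (x : ℝ) : cauchyProfile (-x) = cauchyProfile x := by
  simp [cauchyProfile]

lemma cauchyProfile_nonneg (x : ℝ) : 0 ≤ cauchyProfile x := by
  unfold cauchyProfile
  positivity

@[fun_prop]
lemma continuous_cauchyProfile : Continuous cauchyProfile :=
  continuous_const.div (by fun_prop) fun x => by positivity

lemma cauchyProfile_sub_mul (b : ℝ) {s : ℝ} (hs : 0 < s) (q : ℝ) :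
    cauchyProfile (b - s * q) = s⁻¹ * cauchyPDFReal (b / s) s⁻¹.toNNReal q := by
  rw [cauchyPDFReal_def, Real.coe_toNNReal _ (inv_nonneg.2 hs.le), cauchyProfile]
  field_simp
  ring

lemma cauchyProfile_mul_cauchyProfile (p : ℝ) {t : ℝ} (ht : t ∈ Ioo 0 1) (q : ℝ) :
    cauchyProfile (p - t * q) * cauchyProfile (p - t * q + q)
      = (t * (1 - t))⁻¹ * (cauchyPDFReal (p / t) t⁻¹.toNNReal q
          * cauchyPDFReal (-p / (1 - t)) (1 - t)⁻¹.toNNReal q) := by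
  rw [← cauchyProfile_neg (p - t * q + q), show -(p - t * q + q) = -p - (1 - t) * q by ring,
    cauchyProfile_sub_mul p ht.1, cauchyProfile_sub_mul (-p) (sub_pos.2 ht.2), mul_inv]
  ring

lemma integrable_cauchyProfile_mul_cauchyProfile (p : ℝ) {t : ℝ} (ht : t ∈ Ioo 0 1) :
    Integrable fun q => cauchyProfile (p - t * q) * cauchyProfile (p - t * q + q) := by
  simp_rw [cauchyProfile_mul_cauchyProfile p ht]
  have ht₁ := sub_pos.2 ht.2
  exact (integrable_cauchyPDFReal_mul_cauchyPDFReal _ _ (by simpa using ht.1)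
    (by simpa using ht₁)).const_mul _

lemma integral_cauchyProfile_mul_cauchyProfile (p : ℝ) {t : ℝ} (ht : t ∈ Ioo 0 1)
    (htp : t ≠ 1 / 2 ∨ p ≠ 0) :
    ∫ q, cauchyProfile (p - t * q) * cauchyProfile (p - t * q + q) = cauchyProfile p := by
  obtain ⟨ht₀, ht₁⟩ := ht
  have ht₁' := sub_pos.2 ht₁
  have hγδ : t⁻¹.toNNReal ≠ (1 - t)⁻¹.toNNReal ∨ p / t ≠ -p / (1 - t) := by
    refine htp.imp (fun h e => h ?_) (fun h e => h ?_)
    · have e' := congrArg NNReal.toReal e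
      rw [Real.coe_toNNReal _ (by positivity), Real.coe_toNNReal _ (by positivity)] at e'
      field_simp at e'
      linarith
    · field_simp at e
      linarith
  simp_rw [cauchyProfile_mul_cauchyProfile p ⟨ht₀, ht₁⟩]
  rw [integral_const_mul, integral_cauchyPDFReal_mul_cauchyPDFReal (by simpa using ht₀)
    (by simpa using ht₁') hγδ, cauchyPDFReal_def, NNReal.coe_add,
    Real.coe_toNNReal _ (by positivity), Real.coe_toNNReal _ (by positivity), cauchyProfile]
  field_simp
  ring

lemma ae_restrict_Ioc_mem_Ioo_and_ne_half :
    ∀ᵐ t ∂volume.restrict (Ioc (0 : ℝ) 1), t ∈ Ioo 0 1 ∧ t ≠ 1 / 2 := by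
  have hcount : ({1, 1 / 2} : Set ℝ).Countable := (toFinite _).countable
  filter_upwards [ae_restrict_mem measurableSet_Ioc,
    ae_restrict_of_ae (hcount.ae_notMem volume)] with t ht hne
  simp only [mem_insert_iff, mem_singleton_iff, not_or] at hne
  exact ⟨⟨ht.1, lt_of_le_of_ne ht.2 hne.1⟩, hne.2⟩

lemma ae_integral_cauchyProfile_mul_cauchyProfile (p : ℝ) :
    ∀ᵐ t ∂volume.restrict (Ioc (0 : ℝ) 1),
      ∫ q, cauchyProfile (p - t * q) * cauchyProfile (p - t * q + q) = cauchyProfile p :=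
  ae_restrict_Ioc_mem_Ioo_and_ne_half.mono fun _ ht =>
    integral_cauchyProfile_mul_cauchyProfile p ht.1 (.inl ht.2)

lemma integrable_uncurry_cauchyProfile_mul_cauchyProfile (p : ℝ) :
    Integrable
      (Function.uncurry fun q t => cauchyProfile (p - t * q) * cauchyProfile (p - t * q + q))
      (volume.prod (volume.restrict (Ioc (0 : ℝ) 1))) := by
  have hcont : Continuous (Function.uncurry fun q t : ℝ =>
      cauchyProfile (p - t * q) * cauchyProfile (p - t * q + q)) := by
    fun_prop
  refine (integrable_prod_iff' hcont.aestronglyMeasurable).2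
    ⟨ae_restrict_Ioc_mem_Ioo_and_ne_half.mono fun t ht =>
      integrable_cauchyProfile_mul_cauchyProfile p ht.1, ?_⟩
  refine (integrable_const (cauchyProfile p)).congr
    ((ae_integral_cauchyProfile_mul_cauchyProfile p).mono fun t ht => ?_)
  simp only [Function.uncurry_apply_pair, ← ht]
  exact (integral_congr_ae (ae_of_all _ fun q =>
    Real.norm_of_nonneg (mul_nonneg (cauchyProfile_nonneg _) (cauchyProfile_nonneg _)))).symm

/-- Characterization identity for the critical profile of the one-dimensional
modified Keller–Segel equation:
`μ(p) = ∫_ℝ ∫₀¹ μ(p − t q) μ(p − t q + q) dt dq`. -/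
theorem cauchyProfile_characterization (p : ℝ) :
    cauchyProfile p =
      ∫ q : ℝ, ∫ t in (0 : ℝ)..1,
        cauchyProfile (p - t * q) * cauchyProfile (p - t * q + q) := by
  simp_rw [intervalIntegral.integral_of_le zero_le_one]
  rw [integral_integral_swap (integrable_uncurry_cauchyProfile_mul_cauchyProfile p),
    integral_congr_ae (ae_integral_cauchyProfile_mul_cauchyProfile p)]
  simp
end

section
/- Let ν : ℝ → [0,∞) be an integrable function and let φ : ℝ → ℝ be continuously differentiable with bounded derivative. Then ∬_{ℝ×ℝ} ((φ(x) − φ(y))/(x − y)) ν(x) ν(y) dx dy = ∫_ℝ φ'(p) (∫_ℝ ∫_0^1 ν(p − t q) ν(p − t q + q) dt dq) dp, where the difference quotient is understood as φ'(x) when x = y. (Doubling-of-variables identity used to derive the characterization of critical profiles.) -/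
/-!
For fixed `t`, the substitution `p = (1 - t) x + t y`, `q = y - x` has Jacobian one, and it turns
`φ'((1 - t) x + t y) ν(x) ν(y)` into `φ'(p) ν(p - t q) ν(p - t q + q)`. Writing the difference
quotient as `∫₀¹ φ'((1 - t) x + t y) dt`, the identity follows by Fubini over `(t, x, y)`, which
is justified because `φ'` is bounded and `ν ⊗ ν` is integrable.
-/

open MeasureTheory Real Set

/-- Inverse of `(x, y) ↦ ((1 - t) x + t y, y - x)`. -/
def doublingMap (t : ℝ) (z : ℝ × ℝ) : ℝ × ℝ := (z.1 - t * z.2, z.1 - t * z.2 + z.2)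

lemma doublingMap_fst_add_mul_sub (t : ℝ) (z : ℝ × ℝ) :
    (doublingMap t z).1 + t * ((doublingMap t z).2 - (doublingMap t z).1) = z.1 := by
  simp only [doublingMap]; ring

lemma measurable_doublingMap : Measurable (Function.uncurry doublingMap) := by
  unfold doublingMap; fun_prop

lemma measurePreserving_doublingMap (t : ℝ) :
    MeasurePreserving (doublingMap t) volume volume := by
  have shear : MeasurePreserving (fun z : ℝ × ℝ => (z.1, z.2 - t * z.1))
      (volume.prod volume) (volume.prod volume) :=
    (MeasurePreserving.id volume).skew_product (g := fun x y => y - t * x) (by fun_prop)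
      (ae_of_all _ fun x => by
        simpa [sub_eq_add_neg] using map_add_right_eq_self (volume : Measure ℝ) (-(t * x)))
  have hcomp : doublingMap t =
      (fun z => (z.2, z.1 + z.2)) ∘ (fun z => (z.1, z.2 - t * z.1)) ∘ Prod.swap :=
    funext fun _ => Prod.ext rfl (add_comm _ _)
  rw [hcomp]
  exact (measurePreserving_prod_add_swap_right volume volume).comp
    (shear.comp Measure.measurePreserving_swap)

lemma measurePreserving_prod_doublingMap (μ : Measure ℝ) [SFinite μ] :
    MeasurePreserving (fun w : ℝ × (ℝ × ℝ) => (w.1, doublingMap w.1 w.2))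
      (μ.prod volume) (μ.prod volume) :=
  (MeasurePreserving.id μ).skew_product measurable_doublingMap
    (ae_of_all _ fun t => (measurePreserving_doublingMap t).map_eq)

lemma dslope_eq_ite (φ : ℝ → ℝ) (x y : ℝ) :
    dslope φ x y = if x = y then deriv φ x else (φ x - φ y) / (x - y) := by
  split_ifs with h
  · rw [h, dslope_same]
  · rw [dslope_of_ne _ (Ne.symm h), slope_def_field, ← neg_sub, ← neg_sub x, neg_div_neg_eq]

lemma dslope_eq_integral_deriv {φ : ℝ → ℝ} (hφ : ContDiff ℝ 1 φ) (x y : ℝ) :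
    dslope φ x y = ∫ t in (0 : ℝ)..1, deriv φ (x + t * (y - x)) := by
  rcases eq_or_ne y x with rfl | hne
  · simp
  have hcont : Continuous (deriv φ) := hφ.continuous_deriv le_rfl
  have ftc := intervalIntegral.integral_unitInterval_deriv_eq_sub (f := φ) (z₀ := x) (z₁ := y - x)
    (by fun_prop) fun t _ => ((hφ.differentiable one_ne_zero) _).hasDerivAt
  have hslope := sub_smul_dslope φ x y
  simp only [smul_eq_mul, add_sub_cancel] at ftc hslope
  exact mul_left_cancel₀ (sub_ne_zero.mpr hne) (hslope.trans ftc.symm)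

lemma integrable_comp_segment_mul_prod {f ν : ℝ → ℝ} (hf : Measurable f) {C : ℝ}
    (hC : ∀ x, |f x| ≤ C) (hν : Integrable ν) (μ : Measure ℝ) [IsFiniteMeasure μ] :
    Integrable (fun w : ℝ × (ℝ × ℝ) => f (w.2.1 + w.1 * (w.2.2 - w.2.1)) * (ν w.2.1 * ν w.2.2))
      (μ.prod volume) :=
  ((hν.mul_prod hν).comp_snd μ).bdd_mul (hf.comp (by fun_prop)).aestronglyMeasurable
    (ae_of_all _ fun _ => hC _)

theorem integral_doubling_of_variables {f ν : ℝ → ℝ} (hf : Measurable f) {C : ℝ}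
    (hC : ∀ x, |f x| ≤ C) (hν : Integrable ν) :
    ∫ z : ℝ × ℝ, (∫ t in (0 : ℝ)..1, f (z.1 + t * (z.2 - z.1))) * ν z.1 * ν z.2 =
      ∫ p, f p * ∫ q, ∫ t in (0 : ℝ)..1, ν (p - t * q) * ν (p - t * q + q) := by
  set μ := volume.restrict (Ioc (0 : ℝ) 1)
  set G : ℝ × (ℝ × ℝ) → ℝ := fun w => f (w.2.1 + w.1 * (w.2.2 - w.2.1)) * (ν w.2.1 * ν w.2.2)
  have hG : Integrable G (μ.prod volume) := integrable_comp_segment_mul_prod hf hC hν μ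
  have hΦ := measurePreserving_prod_doublingMap μ
  have hGΦ : Integrable (fun w => G (w.1, doublingMap w.1 w.2)) (μ.prod volume) :=
    (hΦ.integrable_comp hG.aestronglyMeasurable).mpr hG
  calc _ = ∫ z : ℝ × ℝ, ∫ t in Ioc 0 1, G (t, z) := by
          refine integral_congr_ae (ae_of_all _ fun z => ?_)
          simp only [G, mul_assoc, intervalIntegral.integral_of_le zero_le_one, integral_mul_const]
    _ = ∫ w, G w ∂(μ.prod volume) := (integral_prod_symm G hG).symm
    _ = ∫ w, G (w.1, doublingMap w.1 w.2) ∂(μ.prod volume) := by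
          rw [← integral_map hΦ.aemeasurable (by rw [hΦ.map_eq]; exact hG.aestronglyMeasurable),
            hΦ.map_eq]
    _ = ∫ z : ℝ × ℝ, ∫ t in Ioc 0 1, G (t, doublingMap t z) := integral_prod_symm _ hGΦ
    _ = ∫ p, ∫ q, ∫ t in Ioc 0 1, G (t, doublingMap t (p, q)) :=
          integral_prod _ hGΦ.integral_prod_right
    _ = _ := by
          refine integral_congr_ae (ae_of_all _ fun p => ?_)
          simp only [G, doublingMap_fst_add_mul_sub]
          simp only [doublingMap, integral_const_mul, intervalIntegral.integral_of_le zero_le_one]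

theorem doubling_of_variables_identity_general (ν φ : ℝ → ℝ)
    (hν : Integrable ν)
    (hφ : ContDiff ℝ 1 φ)
    (hbd : ∃ C : ℝ, ∀ x, |deriv φ x| ≤ C) :
    (∫ p : ℝ × ℝ,
        (if p.1 = p.2 then deriv φ p.1 else (φ p.1 - φ p.2) / (p.1 - p.2)) *
          ν p.1 * ν p.2) =
      ∫ p : ℝ, deriv φ p *
        ∫ q : ℝ, ∫ t in (0 : ℝ)..1, ν (p - t * q) * ν (p - t * q + q) := by
  obtain ⟨C, hC⟩ := hbd
  simp_rw [← dslope_eq_ite, dslope_eq_integral_deriv hφ]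
  exact integral_doubling_of_variables (measurable_deriv φ) hC hν

/-- Doubling-of-variables identity: for an integrable nonnegative `ν` and a `C¹`
function `φ` with bounded derivative,
`∬ ((φ(x)−φ(y))/(x−y)) ν(x)ν(y) dx dy
  = ∫ φ'(p) (∫_ℝ ∫₀¹ ν(p−tq) ν(p−tq+q) dt dq) dp`,
where the difference quotient is read as `φ'(x)` on the diagonal. -/
theorem doubling_of_variables_identity (ν φ : ℝ → ℝ)
    (hν0 : ∀ x, 0 ≤ ν x) (hν : Integrable ν)
    (hφ : ContDiff ℝ 1 φ)
    (hbd : ∃ C : ℝ, ∀ x, |deriv φ x| ≤ C) :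
    (∫ p : ℝ × ℝ,
        (if p.1 = p.2 then deriv φ p.1 else (φ p.1 - φ p.2) / (p.1 - p.2)) *
          ν p.1 * ν p.2) =
      ∫ p : ℝ, deriv φ p *
        ∫ q : ℝ, ∫ t in (0 : ℝ)..1, ν (p - t * q) * ν (p - t * q + q) :=
  doubling_of_variables_identity_general ν φ hν hφ hbd
end

section
/- For all positive real numbers r and s, (1/2) ∫_0^{2π} log(r² + s² − 2 r s cos θ) dθ = 2π · log(max(r, s)). (Newton's theorem for the logarithmic kernel in two dimensions.) -/
/-!
Since `r² + s² - 2rs cos θ = |r e^{iθ} - s|²`, the integral is `4π` times the average of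
`log |z - s|` over the circle `|z| = r`. That average is `log max(r, s)`: it is the value at the
centre when `s` lies outside the circle (`log |z - s|` is harmonic there) and `log r` when it
lies inside.
-/

open Real

theorem Real.log_add_posLog_inv_mul {R t : ℝ} (hR : 0 < R) (ht : 0 ≤ t) :
    log R + log⁺ (R⁻¹ * t) = log (max R t) := by
  rw [posLog_eq_log_max_one (by positivity), ← log_mul hR.ne' (by positivity),
    mul_max_of_nonneg _ _ hR.le, mul_one, mul_inv_cancel_left₀ hR.ne']

theorem Real.circleAverage_log_norm_sub_const_eq_log_max (a c : ℂ) (R : ℝ) :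
    circleAverage (log ‖· - a‖) c R = log (max |R| ‖c - a‖) := by
  rcases eq_or_ne R 0 with rfl | hR
  · simp
  rw [← circleAverage_abs_radius, circleAverage_log_norm_sub_const_eq_log_radius_add_posLog
    (abs_ne_zero.mpr hR), log_add_posLog_inv_mul (abs_pos.mpr hR) (norm_nonneg _)]

theorem norm_circleMap_zero_sub_ofReal_sq (r s θ : ℝ) :
    ‖circleMap 0 r θ - s‖ ^ 2 = r ^ 2 + s ^ 2 - 2 * r * s * cos θ := by
  rw [← Complex.normSq_eq_norm_sq, Complex.normSq_apply]
  simp only [circleMap, zero_add, Complex.sub_re, Complex.mul_re, Complex.ofReal_re,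
    Complex.exp_re, Complex.I_re, mul_zero, Complex.ofReal_im, Complex.I_im, mul_one, sub_self,
    exp_zero, Complex.mul_im, add_zero, one_mul, Complex.exp_im, zero_mul, sub_zero,
    Complex.sub_im]
  linear_combination r ^ 2 * sin_sq_add_cos_sq θ

theorem integral_log_sq_add_sq_sub_two_mul_mul_cos (r s : ℝ) :
    ∫ θ in (0 : ℝ)..(2 * π), log (r ^ 2 + s ^ 2 - 2 * r * s * cos θ) =
      4 * π * log (max |r| |s|) := by
  have h := circleAverage_log_norm_sub_const_eq_log_max (s : ℂ) 0 r
  rw [circleAverage_def, smul_eq_mul, zero_sub, norm_neg, Complex.norm_real, norm_eq_abs] at h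
  simp_rw [← norm_circleMap_zero_sub_ofReal_sq, log_pow]
  rw [intervalIntegral.integral_const_mul, ← h]
  field_simp
  ring

/-- Newton's theorem for the logarithmic kernel in two dimensions:
`(1/2) ∫₀^{2π} log(r² + s² − 2rs cos θ) dθ = 2π log(max r s)` for `r, s > 0`. -/
theorem newton_log_kernel (r s : ℝ) (hr : 0 < r) (hs : 0 < s) :
    (1 / 2) * ∫ θ in (0 : ℝ)..(2 * π),
        Real.log (r ^ 2 + s ^ 2 - 2 * r * s * Real.cos θ) =
      2 * π * Real.log (max r s) := by
  rw [integral_log_sq_add_sq_sub_two_mul_mul_cos, abs_of_pos hr, abs_of_pos hs]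
  ring
end

section
/- Let H(t) = ((1+t)²/(2t)) log(1+t) − ((1−t)²/(2t)) log(1−t) − 2 for t ∈ (0,1), and let φ(t) = log(1 − t³), a strictly decreasing bijection from (0,1) onto (−∞,0). Then the composition H ∘ φ^{-1} is concave on (−∞, 0). (Obstruction to the optimal-transport proof of the logarithmic HLS inequality in dimension three.) -/
open Real

/-- The function `H(t) = ((1+t)²/(2t)) log(1+t) − ((1−t)²/(2t)) log(1−t) − 2`
arising in the spherical average of the logarithmic kernel in 3D. -/
noncomputable def Hkernel (t : ℝ) : ℝ :=
  (1 + t) ^ 2 / (2 * t) * Real.log (1 + t) -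
    (1 - t) ^ 2 / (2 * t) * Real.log (1 - t) - 2

/-- `φ(t) = log(1 − t³)`, a strictly decreasing bijection from `(0,1)` onto
`(−∞,0)`. -/
noncomputable def phiCube (t : ℝ) : ℝ := Real.log (1 - t ^ 3)

/-!
On `(-∞, 0)` the inverse of `φ` is `ψ s = (1 - eˢ)^(1/3)`, a decreasing function, and by the
chain rule and the inverse function theorem `(H ∘ ψ)'(s) = F (ψ s)` with
`F t = H'(t) (t³ - 1) / (3t²)`. Concavity therefore reduces to `F` being increasing on `(0, 1)`.
With `L = log (1 + t) - log (1 - t)` one finds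
`6t⁵ F'(t) = 2t(4 - t³) - (4 - 2t² - t³ - t⁵) L`, which is nonnegative
thanks to the series bound `L ≤ 2t + 2t³ / (3(1 - t²))`.
-/

open Set

lemma log_one_add_sub_log_one_sub_le {t : ℝ} (h0 : 0 ≤ t) (h1 : t < 1) :
    log (1 + t) - log (1 - t) ≤ 2 * t + 2 * t ^ 3 / (3 * (1 - t ^ 2)) := by
  have ht2 : t ^ 2 < 1 := by nlinarith
  -- termwise comparison of `∑ 2t^(2k+1)/(2k+1)` with `2t + (2/3) ∑_{k ≥ 1} t^(2k+1)`
  have hgeom := ((hasSum_geometric_of_lt_one (sq_nonneg t) ht2).mul_left (2 / 3 * t)).add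
    (hasSum_ite_eq 0 (4 / 3 * t))
  have hseries := hasSum_log_sub_log_of_abs_lt_one (abs_lt.mpr ⟨by linarith, h1⟩)
  have hle := hasSum_le (fun k => ?_) hseries hgeom
  · refine hle.trans_eq ?_
    have : 1 - t ^ 2 ≠ 0 := by linarith
    field_simp
    ring
  · rcases k with _ | k
    · simp only [if_true]
      linarith
    · have hcoeff : (2 : ℝ) * (1 / (2 * (k + 1 : ℕ) + 1)) ≤ 2 / 3 := by
        rw [mul_one_div, div_le_div_iff₀ (by positivity) (by norm_num)]
        push_cast
        linarith
      have hpow : 2 / 3 * t * (t ^ 2) ^ (k + 1) = 2 / 3 * t ^ (2 * (k + 1) + 1) := by ring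
      simp only [Nat.add_one_ne_zero, if_false, add_zero, hpow]
      exact mul_le_mul_of_nonneg_right hcoeff (by positivity)

lemma mul_log_one_add_sub_log_one_sub_le {t : ℝ} (h0 : 0 < t) (h1 : t < 1) :
    (4 - 2 * t ^ 2 - t ^ 3 - t ^ 5) * (log (1 + t) - log (1 - t)) ≤ 2 * t * (4 - t ^ 3) := by
  have hsq : 0 < 1 - t ^ 2 := by nlinarith
  have hcoeff : 0 ≤ 4 - 2 * t ^ 2 - t ^ 3 - t ^ 5 := by
    nlinarith [pow_le_one₀ h0.le h1.le (n := 3)]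
  calc (4 - 2 * t ^ 2 - t ^ 3 - t ^ 5) * (log (1 + t) - log (1 - t))
      ≤ (4 - 2 * t ^ 2 - t ^ 3 - t ^ 5) * (2 * t + 2 * t ^ 3 / (3 * (1 - t ^ 2))) :=
        mul_le_mul_of_nonneg_left (log_one_add_sub_log_one_sub_le h0.le h1) hcoeff
    _ = 2 * t * (4 - t ^ 3) -
          4 * t ^ 3 * (1 - t) * (t ^ 4 + t ^ 3 - t ^ 2 + t + 1) / (3 * (1 - t ^ 2)) := by
        field_simp
        ring
    _ ≤ 2 * t * (4 - t ^ 3) := by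
        have : 0 ≤ t ^ 4 + t ^ 3 - t ^ 2 + t + 1 := by nlinarith
        have : 0 ≤ 1 - t := by linarith
        have : 0 ≤ 4 * t ^ 3 * (1 - t) * (t ^ 4 + t ^ 3 - t ^ 2 + t + 1) / (3 * (1 - t ^ 2)) := by
          positivity
        linarith

noncomputable def hkernelDeriv (t : ℝ) : ℝ :=
  1 / t - (1 - t ^ 2) / (2 * t ^ 2) * (log (1 + t) - log (1 - t))

lemma hasDerivAt_Hkernel {t : ℝ} (h0 : 0 < t) (h1 : t < 1) :
    HasDerivAt Hkernel (hkernelDeriv t) t := by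
  have hp : 1 + t ≠ 0 := by linarith
  have hm : 1 - t ≠ 0 := by linarith
  have hx := hasDerivAt_id' t
  have hA := (((hx.const_add 1).fun_pow 2).fun_div (hx.const_mul 2) (by positivity)).fun_mul
    ((hx.const_add 1).log hp)
  have hB := (((hx.const_sub 1).fun_pow 2).fun_div (hx.const_mul 2) (by positivity)).fun_mul
    ((hx.const_sub 1).log hm)
  refine ((hA.fun_sub hB).sub_const 2).congr_deriv ?_
  simp only [hkernelDeriv]
  field_simp
  ring

lemma hasDerivAt_hkernelDeriv {t : ℝ} (h0 : 0 < t) (h1 : t < 1) :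
    HasDerivAt hkernelDeriv ((log (1 + t) - log (1 - t)) / t ^ 3 - 2 / t ^ 2) t := by
  have hp : 1 + t ≠ 0 := by linarith
  have hm : 1 - t ≠ 0 := by linarith
  have hx := hasDerivAt_id' t
  have hL := ((hx.const_add 1).log hp).fun_sub ((hx.const_sub 1).log hm)
  have := ((hasDerivAt_const t (1 : ℝ)).fun_div hx h0.ne').fun_sub
    ((((hx.fun_pow 2).const_sub 1).fun_div ((hx.fun_pow 2).const_mul 2) (by positivity)).fun_mul hL)
  refine this.congr_deriv ?_
  field_simp
  ring

/-- The derivative of `H ∘ φ⁻¹` at `φ t`, written as a function of `t`. -/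
noncomputable def hkernelPhiDeriv (t : ℝ) : ℝ := hkernelDeriv t * ((t ^ 3 - 1) / (3 * t ^ 2))

lemma hasDerivAt_hkernelPhiDeriv {t : ℝ} (h0 : 0 < t) (h1 : t < 1) :
    HasDerivAt hkernelPhiDeriv ((2 * t * (4 - t ^ 3) -
      (4 - 2 * t ^ 2 - t ^ 3 - t ^ 5) * (log (1 + t) - log (1 - t))) / (6 * t ^ 5)) t := by
  have hx := hasDerivAt_id' t
  have := (hasDerivAt_hkernelDeriv h0 h1).fun_mul
    (((hx.fun_pow 3).sub_const 1).fun_div ((hx.fun_pow 2).const_mul 3) (by positivity))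
  refine this.congr_deriv ?_
  simp only [hkernelDeriv]
  field_simp
  ring

lemma monotoneOn_hkernelPhiDeriv : MonotoneOn hkernelPhiDeriv (Ioo 0 1) := by
  refine monotoneOn_of_deriv_nonneg (convex_Ioo 0 1)
    (fun t ht => (hasDerivAt_hkernelPhiDeriv ht.1 ht.2).continuousAt.continuousWithinAt)
    (fun t ht => ?_) (fun t ht => ?_) <;> rw [interior_Ioo] at ht
  · exact (hasDerivAt_hkernelPhiDeriv ht.1 ht.2).differentiableAt.differentiableWithinAt
  · rw [(hasDerivAt_hkernelPhiDeriv ht.1 ht.2).deriv]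
    exact div_nonneg (sub_nonneg.mpr (mul_log_one_add_sub_log_one_sub_le ht.1 ht.2))
      (by have := ht.1; positivity)

noncomputable def phiCubeInv (s : ℝ) : ℝ := (1 - exp s) ^ (1 / 3 : ℝ)

lemma phiCubeInv_mem_Ioo {s : ℝ} (hs : s < 0) : phiCubeInv s ∈ Ioo 0 1 := by
  have : 0 < 1 - exp s := by linarith [exp_lt_one_iff.mpr hs]
  exact ⟨rpow_pos_of_pos this _, rpow_lt_one this.le (by linarith [exp_pos s]) (by norm_num)⟩

lemma phiCube_phiCubeInv {s : ℝ} (hs : s < 0) : phiCube (phiCubeInv s) = s := by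
  have hcube : phiCubeInv s ^ 3 = 1 - exp s := by
    rw [phiCubeInv, ← rpow_natCast, ← rpow_mul (by linarith [exp_lt_one_iff.mpr hs])]
    norm_num
  rw [phiCube, hcube, sub_sub_cancel, log_exp]

lemma antitoneOn_phiCubeInv : AntitoneOn phiCubeInv (Iio 0) := fun a ha b hb hab =>
  rpow_le_rpow (by linarith [exp_lt_one_iff.mpr hb]) (by linarith [exp_le_exp.mpr hab])
    (by norm_num)

lemma hasDerivAt_phiCubeInv {s : ℝ} (hs : s < 0) :
    HasDerivAt phiCubeInv ((phiCubeInv s ^ 3 - 1) / (3 * phiCubeInv s ^ 2)) s := by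
  obtain ⟨h0, h1⟩ := phiCubeInv_mem_Ioo hs
  have hcont : ContinuousAt phiCubeInv s := by
    unfold phiCubeInv
    fun_prop (disch := norm_num)
  have hne : 1 - phiCubeInv s ^ 3 ≠ 0 := (sub_pos.mpr (pow_lt_one₀ h0.le h1 three_ne_zero)).ne'
  have hphi := ((hasDerivAt_pow 3 (phiCubeInv s)).const_sub 1).log hne
  have := hphi.of_local_left_inverse hcont (div_ne_zero (neg_ne_zero.mpr (by positivity)) hne)
    ((isOpen_Iio.eventually_mem hs).mono fun y hy => phiCube_phiCubeInv hy)
  refine this.congr_deriv ?_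
  field_simp
  ring

lemma hasDerivAt_Hkernel_comp_phiCubeInv {s : ℝ} (hs : s < 0) :
    HasDerivAt (fun s => Hkernel (phiCubeInv s)) (hkernelPhiDeriv (phiCubeInv s)) s :=
  (hasDerivAt_Hkernel (phiCubeInv_mem_Ioo hs).1 (phiCubeInv_mem_Ioo hs).2).comp s
    (hasDerivAt_phiCubeInv hs)

lemma concaveOn_Hkernel_comp_phiCubeInv :
    ConcaveOn ℝ (Iio 0) (fun s => Hkernel (phiCubeInv s)) := by
  refine AntitoneOn.concaveOn_of_deriv (convex_Iio 0)
    (fun s hs => (hasDerivAt_Hkernel_comp_phiCubeInv hs).continuousAt.continuousWithinAt)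
    (fun s hs => ?_) (fun a ha b hb hab => ?_) <;> rw [interior_Iio] at *
  · exact (hasDerivAt_Hkernel_comp_phiCubeInv hs).differentiableAt.differentiableWithinAt
  · rw [(hasDerivAt_Hkernel_comp_phiCubeInv ha).deriv,
      (hasDerivAt_Hkernel_comp_phiCubeInv hb).deriv]
    exact monotoneOn_hkernelPhiDeriv (phiCubeInv_mem_Ioo hb) (phiCubeInv_mem_Ioo ha)
      (antitoneOn_phiCubeInv ha hb hab)

/-- Obstruction in dimension three: if `ψ` inverts `φ(t) = log(1−t³)` on
`(0,1)` (so that `ψ` coincides with `φ⁻¹` on `(−∞,0)`), then `H ∘ φ⁻¹` is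
concave on `(−∞,0)`. -/
theorem obstruction_dimension_three (ψ : ℝ → ℝ)
    (hψ : ∀ t ∈ Set.Ioo (0 : ℝ) 1, ψ (phiCube t) = t) :
    ConcaveOn ℝ (Set.Iio (0 : ℝ)) (fun s => Hkernel (ψ s)) := by
  have hψ_eq : EqOn phiCubeInv ψ (Iio 0) := fun s hs => by
    rw [← hψ _ (phiCubeInv_mem_Ioo hs), phiCube_phiCubeInv hs]
  exact concaveOn_Hkernel_comp_phiCubeInv.congr fun s hs => congrArg Hkernel (hψ_eq hs)
end

section
/- Let ρ : ℝ → [0,∞) be an integrable function and let ρ̂(ξ) = ∫_ℝ ρ(x) e^{iξx} dx denote its Fourier transform. Then for every ξ ∈ ℝ, ∬_{ℝ×ℝ} ρ(x) ρ(y) (e^{iξx} − e^{iξy})/(x − y) dx dy = iξ ∫_0^1 ρ̂(σξ) ρ̂((1−σ)ξ) dσ, where the quotient is understood as iξ e^{iξx} when x = y. (Fourier representation of the one-dimensional logarithmic interaction term.) -/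
open MeasureTheory Real Complex

/-!
Write the divided difference of `t ↦ e^{iξt}` as `iξ ∫₀¹ e^{iξ((1-σ)y+σx)} dσ` (fundamental theorem
of calculus along the segment from `y` to `x`). The resulting triple integrand is bounded by
`|ρ(x)| |ρ(y)|`, so Fubini lets us integrate over `(x, y)` first, and there the phase factorizes as
`e^{iσξx} e^{i(1-σ)ξy}`, giving `ρ̂(σξ) ρ̂((1-σ)ξ)`.
-/

/-- The Fourier transform `ρ̂(ξ) = ∫ ρ(x) e^{iξx} dx` of an integrable
density. -/
noncomputable def fourierHat (ρ : ℝ → ℝ) (ξ : ℝ) : ℂ :=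
  ∫ x : ℝ, (ρ x : ℂ) * Complex.exp (Complex.I * (ξ : ℂ) * (x : ℂ))

lemma norm_cexp_I_mul_ofReal_mul_ofReal (ξ t : ℝ) : ‖cexp (I * ξ * t)‖ = 1 := by
  rw [show I * ξ * t = ((ξ * t : ℝ) : ℂ) * I by push_cast; ring, norm_exp_ofReal_mul_I]

lemma hasDerivAt_cexp_segment (ξ x y σ : ℝ) :
    HasDerivAt (fun s : ℝ => cexp (I * ξ * (((1 - s) * y + s * x : ℝ) : ℂ)))
      (I * ξ * (x - y) * cexp (I * ξ * (((1 - σ) * y + σ * x : ℝ) : ℂ))) σ := by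
  have hline : HasDerivAt (fun s : ℝ => (1 - s) * y + s * x) (x - y) σ := by
    have h := ((hasDerivAt_id' σ).mul_const (x - y)).const_add y
    rw [one_mul] at h
    exact h.congr_of_eventuallyEq (.of_forall fun s => by ring)
  convert (hline.ofReal_comp.const_mul (I * ξ)).cexp using 1
  push_cast
  ring

lemma mul_integral_cexp_segment (ξ x y : ℝ) :
    I * ξ * (x - y) * ∫ σ in (0 : ℝ)..1, cexp (I * ξ * (((1 - σ) * y + σ * x : ℝ) : ℂ)) =
      cexp (I * ξ * x) - cexp (I * ξ * y) := by
  rw [← intervalIntegral.integral_const_mul,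
    intervalIntegral.integral_eq_sub_of_hasDerivAt (fun σ _ => hasDerivAt_cexp_segment ξ x y σ)
      (by apply Continuous.intervalIntegrable; fun_prop)]
  norm_num

lemma divided_difference_cexp_eq_integral (ξ x y : ℝ) :
    (if x = y then I * ξ * cexp (I * ξ * x)
      else (cexp (I * ξ * x) - cexp (I * ξ * y)) / ((x : ℂ) - y)) =
      I * ξ * ∫ σ in (0 : ℝ)..1, cexp (I * ξ * (((1 - σ) * y + σ * x : ℝ) : ℂ)) := by
  split_ifs with hxy
  · subst hxy
    have hconst (σ : ℝ) : (1 - σ) * x + σ * x = x := by ring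
    simp [hconst]
  · have hxy' : (x : ℂ) - y ≠ 0 := sub_ne_zero.2 (mod_cast hxy)
    rw [div_eq_iff hxy', ← mul_integral_cexp_segment]
    ring

lemma integrable_mul_cexp_segment {ρ : ℝ → ℝ} (hρ : Integrable ρ) (ξ : ℝ)
    (ν : Measure ℝ) [IsFiniteMeasure ν] :
    Integrable (fun q : (ℝ × ℝ) × ℝ => (ρ q.1.1 : ℂ) * ρ q.1.2 *
      cexp (I * ξ * (((1 - q.2) * q.1.2 + q.2 * q.1.1 : ℝ) : ℂ)))
      ((volume : Measure (ℝ × ℝ)).prod ν) := by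
  have hρρ : Integrable (fun p : ℝ × ℝ => (ρ p.1 : ℂ) * ρ p.2) :=
    hρ.ofReal.mul_prod hρ.ofReal
  refine (hρρ.norm.mul_prod (integrable_const (1 : ℝ))).mono'
    (hρρ.aestronglyMeasurable.comp_fst.mul (by fun_prop)) (.of_forall fun q => ?_)
  rw [norm_mul, norm_cexp_I_mul_ofReal_mul_ofReal]

lemma integral_prod_mul_cexp_segment_eq_fourierHat_mul (ρ : ℝ → ℝ) (ξ σ : ℝ) :
    ∫ p : ℝ × ℝ, (ρ p.1 : ℂ) * ρ p.2 * cexp (I * ξ * (((1 - σ) * p.2 + σ * p.1 : ℝ) : ℂ)) =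
      fourierHat ρ (σ * ξ) * fourierHat ρ ((1 - σ) * ξ) := by
  rw [fourierHat, fourierHat, ← integral_prod_mul, ← Measure.volume_eq_prod]
  congr with p
  rw [mul_mul_mul_comm, ← Complex.exp_add]
  push_cast
  ring_nf

theorem fourier_interaction_representation_general (ρ : ℝ → ℝ)
    (hρ : Integrable ρ) (ξ : ℝ) :
    (∫ p : ℝ × ℝ, (ρ p.1 : ℂ) * (ρ p.2 : ℂ) *
        (if p.1 = p.2 then
          Complex.I * (ξ : ℂ) * Complex.exp (Complex.I * (ξ : ℂ) * (p.1 : ℂ))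
        else
          (Complex.exp (Complex.I * (ξ : ℂ) * (p.1 : ℂ)) -
              Complex.exp (Complex.I * (ξ : ℂ) * (p.2 : ℂ))) /
            ((p.1 : ℂ) - (p.2 : ℂ)))) =
      Complex.I * (ξ : ℂ) *
        ∫ σ in (0 : ℝ)..1, fourierHat ρ (σ * ξ) * fourierHat ρ ((1 - σ) * ξ) := by
  have hint := integrable_mul_cexp_segment hρ ξ (volume.restrict (Set.Ioc 0 1))
  calc _ = ∫ p : ℝ × ℝ, I * ξ * ∫ σ in Set.Ioc (0 : ℝ) 1,
          (ρ p.1 : ℂ) * ρ p.2 * cexp (I * ξ * (((1 - σ) * p.2 + σ * p.1 : ℝ) : ℂ)) := by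
        refine integral_congr_ae (.of_forall fun p => ?_)
        simp only [divided_difference_cexp_eq_integral, intervalIntegral.integral_of_le zero_le_one,
          integral_const_mul]
        ring
    _ = I * ξ * ∫ σ in Set.Ioc (0 : ℝ) 1, ∫ p : ℝ × ℝ,
          (ρ p.1 : ℂ) * ρ p.2 * cexp (I * ξ * (((1 - σ) * p.2 + σ * p.1 : ℝ) : ℂ)) := by
        rw [integral_const_mul, integral_integral_swap hint]
    _ = _ := by
        simp only [integral_prod_mul_cexp_segment_eq_fourierHat_mul,
          intervalIntegral.integral_of_le zero_le_one]

/-- Fourier representation of the one-dimensional logarithmic interaction term: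
`∬ ρ(x)ρ(y) (e^{iξx} − e^{iξy})/(x−y) dx dy = iξ ∫₀¹ ρ̂(σξ) ρ̂((1−σ)ξ) dσ`,
with the quotient read as `iξ e^{iξx}` on the diagonal. -/
theorem fourier_interaction_representation (ρ : ℝ → ℝ)
    (hρ0 : ∀ x, 0 ≤ ρ x) (hρ : Integrable ρ) (ξ : ℝ) :
    (∫ p : ℝ × ℝ, (ρ p.1 : ℂ) * (ρ p.2 : ℂ) *
        (if p.1 = p.2 then
          Complex.I * (ξ : ℂ) * Complex.exp (Complex.I * (ξ : ℂ) * (p.1 : ℂ))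
        else
          (Complex.exp (Complex.I * (ξ : ℂ) * (p.1 : ℂ)) -
              Complex.exp (Complex.I * (ξ : ℂ) * (p.2 : ℂ))) /
            ((p.1 : ℂ) - (p.2 : ℂ)))) =
      Complex.I * (ξ : ℂ) *
        ∫ σ in (0 : ℝ)..1, fourierHat ρ (σ * ξ) * fourierHat ρ ((1 - σ) * ξ) :=
  fourier_interaction_representation_general ρ hρ ξ
end

section
/- Let ρ₁ and ρ₂ be probability measures on ℝ with the same finite first moment and finite second moments, with characteristic functions ρ̂₁, ρ̂₂, and let d₁(ρ₁,ρ₂) = sup_{ξ≠0} |ξ|^{-1}|ρ̂₁(ξ) − ρ̂₂(ξ)| (which is finite). Then for every ξ ≠ 0, |ξ|^{-1} | ∫_0^1 ( ρ̂₁(σξ) ρ̂₁((1−σ)ξ) − ρ̂₂(σξ) ρ̂₂((1−σ)ξ) ) dσ | ≤ d₁(ρ₁, ρ₂). (Contraction estimate for the quadratic interaction term in Fourier variables.) -/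
open MeasureTheory Real Complex

/-- The characteristic function `ρ̂(ξ) = ∫ e^{iξx} dρ(x)` of a measure on `ℝ`. -/
noncomputable def charFn (ρ : Measure ℝ) (ξ : ℝ) : ℂ :=
  ∫ x : ℝ, Complex.exp (Complex.I * (ξ : ℂ) * (x : ℂ)) ∂ρ

/-- The Fourier (Toscani) distance of order 1,
`d₁(ρ₁,ρ₂) = sup_{ξ≠0} |ξ|⁻¹ |ρ̂₁(ξ) − ρ̂₂(ξ)|`. -/
noncomputable def fourierDist1 (ρ₁ ρ₂ : Measure ℝ) : ℝ :=
  sSup {y : ℝ | ∃ ξ : ℝ, ξ ≠ 0 ∧ y = |ξ|⁻¹ * ‖charFn ρ₁ ξ - charFn ρ₂ ξ‖}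

/-!
Writing `a₁b₁ − a₂b₂ = (a₁ − a₂)b₁ + a₂(b₁ − b₂)` with `a = ρ̂(σξ)`, `b = ρ̂((1−σ)ξ)` and using
`‖ρ̂‖ ≤ 1`, the integrand is at most `d₁ (|σξ| + |(1−σ)ξ|) = d₁ |ξ|` for `σ ∈ [0,1]`.
For `|ρ̂₁(η) − ρ̂₂(η)| ≤ d₁ |η|` to hold with the `sSup` of `fourierDist1` (which is `0` on
unbounded sets), the quotients must be bounded; they are, by `|e^{iθ} − 1| ≤ |θ|` and finite
first moments.
-/

lemma charFn_eq_charFun (ρ : Measure ℝ) (ξ : ℝ) : charFn ρ ξ = charFun ρ ξ := by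
  rw [charFn, charFun_apply_real]
  congr 1 with x
  ring_nf

lemma norm_charFn_le_one (ρ : Measure ℝ) [IsProbabilityMeasure ρ] (ξ : ℝ) : ‖charFn ρ ξ‖ ≤ 1 := by
  rw [charFn_eq_charFun]
  exact norm_charFun_le_one ξ

lemma norm_charFn_sub_one_le (ρ : Measure ℝ) [IsProbabilityMeasure ρ]
    (h : Integrable (fun x : ℝ => x) ρ) (ξ : ℝ) :
    ‖charFn ρ ξ - 1‖ ≤ |ξ| * ∫ x, |x| ∂ρ := by
  have hexp : Integrable (fun x : ℝ => Complex.exp (Complex.I * ξ * x)) ρ :=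
    (integrable_const (1 : ℝ)).mono (by fun_prop) (ae_of_all _ fun x => by
      simp [← ofReal_mul, mul_assoc, norm_exp_I_mul_ofReal])
  calc ‖charFn ρ ξ - 1‖ = ‖∫ x, (Complex.exp (Complex.I * ξ * x) - 1) ∂ρ‖ := by
        rw [integral_sub hexp (integrable_const 1), charFn]
        simp
    _ ≤ ∫ x, |ξ| * |x| ∂ρ := by
        refine norm_integral_le_of_norm_le (h.norm.const_mul _) (ae_of_all _ fun x => ?_)
        rw [mul_assoc, ← ofReal_mul, ← abs_mul]
        exact Real.norm_exp_I_mul_ofReal_sub_one_le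
    _ = |ξ| * ∫ x, |x| ∂ρ := integral_const_mul _ _

lemma norm_charFn_sub_charFn_le (ρ₁ ρ₂ : Measure ℝ)
    [IsProbabilityMeasure ρ₁] [IsProbabilityMeasure ρ₂]
    (h₁ : Integrable (fun x : ℝ => x) ρ₁) (h₂ : Integrable (fun x : ℝ => x) ρ₂) (ξ : ℝ) :
    ‖charFn ρ₁ ξ - charFn ρ₂ ξ‖ ≤ |ξ| * ((∫ x, |x| ∂ρ₁) + ∫ x, |x| ∂ρ₂) := by
  calc ‖charFn ρ₁ ξ - charFn ρ₂ ξ‖ = ‖(charFn ρ₁ ξ - 1) - (charFn ρ₂ ξ - 1)‖ := by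
        rw [sub_sub_sub_cancel_right]
    _ ≤ ‖charFn ρ₁ ξ - 1‖ + ‖charFn ρ₂ ξ - 1‖ := norm_sub_le _ _
    _ ≤ |ξ| * ∫ x, |x| ∂ρ₁ + |ξ| * ∫ x, |x| ∂ρ₂ :=
        add_le_add (norm_charFn_sub_one_le ρ₁ h₁ ξ) (norm_charFn_sub_one_le ρ₂ h₂ ξ)
    _ = |ξ| * ((∫ x, |x| ∂ρ₁) + ∫ x, |x| ∂ρ₂) := by ring

lemma fourierDist1_nonneg (ρ₁ ρ₂ : Measure ℝ) : 0 ≤ fourierDist1 ρ₁ ρ₂ :=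
  Real.sSup_nonneg fun _ ⟨_, _, hy⟩ => hy ▸ by positivity

lemma norm_charFn_sub_charFn_le_fourierDist1 (ρ₁ ρ₂ : Measure ℝ)
    [IsProbabilityMeasure ρ₁] [IsProbabilityMeasure ρ₂]
    (h₁ : Integrable (fun x : ℝ => x) ρ₁) (h₂ : Integrable (fun x : ℝ => x) ρ₂) (η : ℝ) :
    ‖charFn ρ₁ η - charFn ρ₂ η‖ ≤ fourierDist1 ρ₁ ρ₂ * |η| := by
  rcases eq_or_ne η 0 with rfl | hη
  · simp [charFn]
  have hbdd : BddAbove {y : ℝ | ∃ ξ : ℝ, ξ ≠ 0 ∧ y = |ξ|⁻¹ * ‖charFn ρ₁ ξ - charFn ρ₂ ξ‖} := by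
    refine ⟨(∫ x, |x| ∂ρ₁) + ∫ x, |x| ∂ρ₂, ?_⟩
    rintro _ ⟨ξ, hξ, rfl⟩
    rw [inv_mul_le_iff₀ (abs_pos.2 hξ)]
    exact norm_charFn_sub_charFn_le ρ₁ ρ₂ h₁ h₂ ξ
  have hle := le_csSup hbdd ⟨η, hη, rfl⟩
  rwa [inv_mul_le_iff₀ (abs_pos.2 hη), mul_comm] at hle

lemma norm_mul_sub_mul_le_of_norm_le_one {R : Type*} [SeminormedRing R] {a₁ a₂ b₁ b₂ : R}
    (hb₁ : ‖b₁‖ ≤ 1) (ha₂ : ‖a₂‖ ≤ 1) : ‖a₁ * b₁ - a₂ * b₂‖ ≤ ‖a₁ - a₂‖ + ‖b₁ - b₂‖ :=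
  calc ‖a₁ * b₁ - a₂ * b₂‖ = ‖(a₁ - a₂) * b₁ + a₂ * (b₁ - b₂)‖ := by noncomm_ring
    _ ≤ ‖a₁ - a₂‖ * ‖b₁‖ + ‖a₂‖ * ‖b₁ - b₂‖ :=
        (norm_add_le _ _).trans (add_le_add (norm_mul_le _ _) (norm_mul_le _ _))
    _ ≤ ‖a₁ - a₂‖ * 1 + 1 * ‖b₁ - b₂‖ := by gcongr
    _ = ‖a₁ - a₂‖ + ‖b₁ - b₂‖ := by ring

lemma norm_interaction_integrand_le (ρ₁ ρ₂ : Measure ℝ)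
    [IsProbabilityMeasure ρ₁] [IsProbabilityMeasure ρ₂]
    (h₁ : Integrable (fun x : ℝ => x) ρ₁) (h₂ : Integrable (fun x : ℝ => x) ρ₂)
    {σ : ℝ} (hσ : σ ∈ Set.Icc 0 1) (ξ : ℝ) :
    ‖charFn ρ₁ (σ * ξ) * charFn ρ₁ ((1 - σ) * ξ) -
        charFn ρ₂ (σ * ξ) * charFn ρ₂ ((1 - σ) * ξ)‖ ≤ fourierDist1 ρ₁ ρ₂ * |ξ| :=
  calc _ ≤ ‖charFn ρ₁ (σ * ξ) - charFn ρ₂ (σ * ξ)‖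
          + ‖charFn ρ₁ ((1 - σ) * ξ) - charFn ρ₂ ((1 - σ) * ξ)‖ :=
        norm_mul_sub_mul_le_of_norm_le_one (norm_charFn_le_one ρ₁ _) (norm_charFn_le_one ρ₂ _)
    _ ≤ fourierDist1 ρ₁ ρ₂ * |σ * ξ| + fourierDist1 ρ₁ ρ₂ * |(1 - σ) * ξ| :=
        add_le_add (norm_charFn_sub_charFn_le_fourierDist1 ρ₁ ρ₂ h₁ h₂ _)
          (norm_charFn_sub_charFn_le_fourierDist1 ρ₁ ρ₂ h₁ h₂ _)
    _ = fourierDist1 ρ₁ ρ₂ * |ξ| := by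
        rw [abs_mul, abs_mul, abs_of_nonneg hσ.1, abs_of_nonneg (sub_nonneg.2 hσ.2)]
        ring

theorem interaction_term_contraction_general (ρ₁ ρ₂ : Measure ℝ)
    [IsProbabilityMeasure ρ₁] [IsProbabilityMeasure ρ₂]
    (h₁ : Integrable (fun x : ℝ => x) ρ₁)
    (h₂ : Integrable (fun x : ℝ => x) ρ₂)
    (ξ : ℝ) :
    |ξ|⁻¹ * ‖∫ σ in (0 : ℝ)..1,
        (charFn ρ₁ (σ * ξ) * charFn ρ₁ ((1 - σ) * ξ) -
          charFn ρ₂ (σ * ξ) * charFn ρ₂ ((1 - σ) * ξ))‖ ≤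
      fourierDist1 ρ₁ ρ₂ := by
  have hintegral := intervalIntegral.norm_integral_le_of_norm_le_const fun σ hσ =>
    norm_interaction_integrand_le ρ₁ ρ₂ h₁ h₂
      (Set.mem_Icc_of_Ioc ((Set.uIoc_of_le zero_le_one).subset hσ)) ξ
  rw [sub_zero, abs_one, mul_one] at hintegral
  calc |ξ|⁻¹ * ‖_‖ ≤ |ξ|⁻¹ * (fourierDist1 ρ₁ ρ₂ * |ξ|) := by gcongr
    _ = fourierDist1 ρ₁ ρ₂ * (|ξ|⁻¹ * |ξ|) := by ring
    _ ≤ fourierDist1 ρ₁ ρ₂ := mul_le_of_le_one_right (fourierDist1_nonneg ρ₁ ρ₂) inv_mul_le_one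

/-- Contraction estimate for the quadratic interaction term in Fourier
variables: for probability measures with the same first moment and finite
second moments, for every `ξ ≠ 0`,
`|ξ|⁻¹ |∫₀¹ (ρ̂₁(σξ)ρ̂₁((1−σ)ξ) − ρ̂₂(σξ)ρ̂₂((1−σ)ξ)) dσ| ≤ d₁(ρ₁,ρ₂)`. -/
theorem interaction_term_contraction (ρ₁ ρ₂ : Measure ℝ)
    [IsProbabilityMeasure ρ₁] [IsProbabilityMeasure ρ₂]
    (h₁ : Integrable (fun x : ℝ => x) ρ₁)
    (h₂ : Integrable (fun x : ℝ => x) ρ₂)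
    (hmean : (∫ x : ℝ, x ∂ρ₁) = ∫ x : ℝ, x ∂ρ₂)
    (h₁' : Integrable (fun x : ℝ => x ^ 2) ρ₁)
    (h₂' : Integrable (fun x : ℝ => x ^ 2) ρ₂)
    (ξ : ℝ) (hξ : ξ ≠ 0) :
    |ξ|⁻¹ * ‖∫ σ in (0 : ℝ)..1,
        (charFn ρ₁ (σ * ξ) * charFn ρ₁ ((1 - σ) * ξ) -
          charFn ρ₂ (σ * ξ) * charFn ρ₂ ((1 - σ) * ξ))‖ ≤
      fourierDist1 ρ₁ ρ₂ :=
  interaction_term_contraction_general ρ₁ ρ₂ h₁ h₂ ξ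
end

section
/- Let 0 < χ < 1 and let ν : ℝ → (0,∞) be a probability density with zero center of mass satisfying the characterization ν(p) = ∫_ℝ ∫_0^1 (χ + q²/2) ν(p − t q) ν(p − t q + q) dt dq for all p, and with second moment ∫_ℝ a² ν(a) da = 1 − χ. Let ψ : ℝ → ℝ be twice continuously differentiable with ψ'' > 0 everywhere, and suppose all the integrals below are finite. Then −∫_ℝ (ψ''(a))^{-1} ν(a) da + χ ∬_{ℝ×ℝ} ((a−b)/(ψ'(a)−ψ'(b))) ν(a)ν(b) da db − (1/2) ∬_{ℝ×ℝ} (ψ'(a)−ψ'(b))(a−b) ν(a)ν(b) da db + 2 ∫_ℝ a ψ'(a) ν(a) da + (1 − χ) − ∫_ℝ (ψ'(a))² ν(a) da ≤ − ∫_ℝ (ψ'(a) − a)² ν(a) da, where the quotient (a−b)/(ψ'(a)−ψ'(b)) is understood as 1/ψ''(a) when a = b. (Key dissipation inequality yielding the exponential contraction of the Wasserstein distance towards self-similarity in the subcritical one-dimensional Keller–Segel equation.) -/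
/-!
Write `φ = ψ'`. Testing the characterization of `ν` against `1/φ'` and substituting
`(a, b) = (p - t q, p - t q + q)` gives
`∫ ν/φ' = ∬ (χ + (b - a)²/2) ⟨1/φ'⟩_{[a,b]} ν(a) ν(b)`, where `⟨·⟩_{[a,b]}` is the mean over the
segment from `a` to `b`. By Jensen this mean dominates `(a - b)/(φ a - φ b)`, the mean of `φ'`
being the slope of `φ`. The resulting `(b - a)²/2`-term is traded by AM–GM against
`(a - b)²` and `½ (φ a - φ b)(a - b)`, and `∬ (a - b)² ν ν = 2(1 - χ)` by the moment conditions;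
expanding `∫ (φ - a)² ν` then gives the inequality. Since `ν` is only a.e. measurable, Tonelli is
applied to the lower integrals of a measurable version of `ν`.
-/

open MeasureTheory Real Set
open scoped ENNReal

theorem inv_integral_le_integral_inv {α : Type*} [MeasurableSpace α] {μ : Measure α}
    [IsProbabilityMeasure μ] {f : α → ℝ} (hf : ∀ᵐ x ∂μ, 0 < f x) (hfi : Integrable f μ)
    (hfi' : Integrable (fun x ↦ (f x)⁻¹) μ) :
    (∫ x, f x ∂μ)⁻¹ ≤ ∫ x, (f x)⁻¹ ∂μ := by
  set A := ∫ x, f x ∂μ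
  rcases le_or_gt A 0 with hA | hA
  · exact (inv_nonpos.mpr hA).trans
      (integral_nonneg_of_ae (hf.mono fun x hx ↦ (inv_pos.mpr hx).le))
  -- the tangent line of `x ↦ x⁻¹` at `A` lies below its graph
  have tangent : ∀ x : ℝ, 0 < x → 2 * A⁻¹ - A⁻¹ ^ 2 * x ≤ x⁻¹ := fun x hx ↦ by
    have h : x⁻¹ - (2 * A⁻¹ - A⁻¹ ^ 2 * x) = (x - A) ^ 2 / (x * A ^ 2) := by
      field_simp; ring
    linarith [show 0 ≤ (x - A) ^ 2 / (x * A ^ 2) by positivity]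
  calc A⁻¹ = ∫ x, (2 * A⁻¹ - A⁻¹ ^ 2 * f x) ∂μ := by
        rw [integral_sub (integrable_const _) (hfi.const_mul _), integral_const,
          integral_const_mul]
        simp only [probReal_univ, one_smul]
        field_simp; ring
    _ ≤ ∫ x, (f x)⁻¹ ∂μ :=
        integral_mono_ae ((integrable_const _).sub (hfi.const_mul _)) hfi'
          (hf.mono fun x ↦ tangent (f x))

noncomputable def invSlope (f : ℝ → ℝ) (a b : ℝ) : ℝ :=
  if a = b then (deriv f a)⁻¹ else (a - b) / (f a - f b)

theorem invSlope_nonneg {f : ℝ → ℝ} (hf : Monotone f) (hf' : ∀ x, 0 ≤ deriv f x) (a b : ℝ) :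
    0 ≤ invSlope f a b := by
  unfold invSlope
  split_ifs
  · exact inv_nonneg.mpr (hf' a)
  rcases le_total a b with h | h
  · exact div_nonneg_of_nonpos (sub_nonpos.mpr h) (sub_nonpos.mpr (hf h))
  · exact div_nonneg (sub_nonneg.mpr h) (sub_nonneg.mpr (hf h))

theorem integral_deriv_comp_lineMap {f : ℝ → ℝ} (hf : ContDiff ℝ 1 f) (a b : ℝ) :
    (b - a) * ∫ t in Ioc (0 : ℝ) 1, deriv f (a + t * (b - a)) = f b - f a := by
  have h := intervalIntegral.integral_unitInterval_deriv_eq_sub (f' := deriv f) (z₀ := a)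
    (z₁ := b - a)
    ((hf.continuous_deriv le_rfl).comp (by fun_prop)).continuousOn
    (fun t _ ↦ (hf.differentiable one_ne_zero _).hasDerivAt)
  simpa [intervalIntegral.integral_of_le zero_le_one] using h

theorem invSlope_le_integral_inv_deriv {f : ℝ → ℝ} (hf : ContDiff ℝ 1 f)
    (hf' : ∀ x, 0 < deriv f x) (a b : ℝ) :
    invSlope f a b ≤ ∫ t in Ioc (0 : ℝ) 1, (deriv f (a + t * (b - a)))⁻¹ := by
  have : IsProbabilityMeasure (volume.restrict (Ioc (0 : ℝ) 1)) := ⟨by simp⟩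
  have hcont : Continuous fun t : ℝ ↦ deriv f (a + t * (b - a)) :=
    (hf.continuous_deriv le_rfl).comp (by fun_prop)
  unfold invSlope
  split_ifs with hab
  · simp [hab]
  have hba : b - a ≠ 0 := sub_ne_zero.mpr (Ne.symm hab)
  have hmean : ∫ t in Ioc (0 : ℝ) 1, deriv f (a + t * (b - a)) = (f b - f a) / (b - a) := by
    rw [eq_div_iff hba, mul_comm, integral_deriv_comp_lineMap hf]
  calc (a - b) / (f a - f b) = (∫ t in Ioc (0 : ℝ) 1, deriv f (a + t * (b - a)))⁻¹ := by
        rw [hmean, inv_div, ← neg_sub b, ← neg_sub (f b), neg_div_neg_eq]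
    _ ≤ _ := inv_integral_le_integral_inv (.of_forall fun t ↦ hf' _)
        hcont.integrableOn_Ioc ((hcont.inv₀ fun t ↦ (hf' _).ne').integrableOn_Ioc)

theorem sq_sub_le_invSlope_add {f : ℝ → ℝ} (hf : StrictMono f) (a b : ℝ) :
    (a - b) ^ 2 ≤ (a - b) ^ 2 / 2 * invSlope f a b + (f a - f b) * (a - b) / 2 := by
  unfold invSlope
  split_ifs with hab
  · simp [hab]
  have hsd₀ : 0 ≤ (f a - f b) * (a - b) :=
    (hf.monotone.monovary monotone_id).sub_mul_sub_nonneg b a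
  have hsd : 0 < (f a - f b) * (a - b) :=
    hsd₀.lt_of_ne' (mul_ne_zero (sub_ne_zero.mpr (hf.injective.ne hab)) (sub_ne_zero.mpr hab))
  have hs : f a - f b ≠ 0 := left_ne_zero_of_mul hsd.ne'
  -- AM–GM for `(a - b)² (a - b) / (f a - f b)` and `(f a - f b) (a - b)`, of product `(a - b)⁴`
  have h : (a - b) ^ 2 / 2 * ((a - b) / (f a - f b)) + (f a - f b) * (a - b) / 2 - (a - b) ^ 2
      = ((a - b) ^ 2 - (f a - f b) * (a - b)) ^ 2 / (2 * ((f a - f b) * (a - b))) := by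
    field_simp; ring
  linarith [show 0 ≤ ((a - b) ^ 2 - (f a - f b) * (a - b)) ^ 2 / (2 * ((f a - f b) * (a - b))) by
    positivity]

theorem integrable_id_mul_of_sq_mul {ν : ℝ → ℝ} (hν : Integrable ν)
    (hν₂ : Integrable fun a ↦ a ^ 2 * ν a) : Integrable fun a ↦ a * ν a := by
  refine (hν.norm.add hν₂.norm).mono' (continuous_id.aestronglyMeasurable.mul hν.1)
    (.of_forall fun a ↦ ?_)
  have h : |a| ≤ 1 + a ^ 2 := by nlinarith [abs_nonneg a, sq_abs a]
  simp only [norm_mul, Real.norm_eq_abs, abs_pow, sq_abs, Pi.add_apply]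
  nlinarith [abs_nonneg (ν a)]

theorem integral_sq_sub_mul_mul {ν : ℝ → ℝ} (hν : Integrable ν)
    (hν₂ : Integrable fun a ↦ a ^ 2 * ν a) (hmass : ∫ a, ν a = 1) (hcm : ∫ a, a * ν a = 0) :
    Integrable (fun z : ℝ × ℝ ↦ (z.2 - z.1) ^ 2 * ν z.1 * ν z.2) ∧
      ∫ z : ℝ × ℝ, (z.2 - z.1) ^ 2 * ν z.1 * ν z.2 = 2 * ∫ a, a ^ 2 * ν a := by
  have hν₁ := integrable_id_mul_of_sq_mul hν hν₂
  rw [Measure.volume_eq_prod]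
  have h₂₀ := hν₂.mul_prod hν
  have h₀₂ := hν.mul_prod hν₂
  have h₁₁ := hν₁.mul_prod hν₁
  have hexpand : (fun z : ℝ × ℝ ↦ (z.2 - z.1) ^ 2 * ν z.1 * ν z.2) = fun z ↦
      z.1 ^ 2 * ν z.1 * ν z.2 + ν z.1 * (z.2 ^ 2 * ν z.2) - 2 * (z.1 * ν z.1 * (z.2 * ν z.2)) := by
    ext z; ring
  have h₂ : Integrable (fun z : ℝ × ℝ ↦ z.1 ^ 2 * ν z.1 * ν z.2 + ν z.1 * (z.2 ^ 2 * ν z.2))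
      (volume.prod volume) :=
    h₂₀.add h₀₂
  rw [hexpand]
  refine ⟨h₂.sub (h₁₁.const_mul 2), ?_⟩
  rw [integral_sub h₂ (h₁₁.const_mul 2), integral_add h₂₀ h₀₂, integral_const_mul,
    integral_prod_mul (fun a ↦ a ^ 2 * ν a) ν, integral_prod_mul ν (fun a ↦ a ^ 2 * ν a),
    integral_prod_mul (fun a ↦ a * ν a) (fun a ↦ a * ν a), hmass, hcm]
  ring

theorem quasiMeasurePreserving_fst_add {β : Type*} [MeasurableSpace β] (μ : Measure β) [SFinite μ]
    {f : β → ℝ} (hf : Measurable f) :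
    Measure.QuasiMeasurePreserving (fun x : ℝ × β ↦ x.1 + f x.2) (volume.prod μ) volume := by
  refine ⟨by fun_prop, Measure.AbsolutelyContinuous.mk fun s hs hs0 ↦ ?_⟩
  rw [Measure.map_apply (by fun_prop) hs, Measure.prod_apply_symm (by measurability)]
  refine lintegral_eq_zero_of_ae_eq_zero (.of_forall fun y ↦ ?_)
  exact (measure_preimage_add_right volume (f y) s).trans hs0

theorem ofReal_integral_mul_mul_eq_lintegral {ν g : ℝ → ℝ} (hg₀ : 0 ≤ g)
    (hνg : ν =ᵐ[volume] g) {w : ℝ × ℝ → ℝ} (hw₀ : 0 ≤ w)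
    (hint : Integrable fun z : ℝ × ℝ ↦ w z * ν z.1 * ν z.2) :
    ENNReal.ofReal (∫ z : ℝ × ℝ, w z * ν z.1 * ν z.2) =
      ∫⁻ z : ℝ × ℝ, ENNReal.ofReal (w z) * ENNReal.ofReal (g z.1) * ENNReal.ofReal (g z.2) := by
  have hae : (fun z : ℝ × ℝ ↦ w z * ν z.1 * ν z.2) =ᵐ[volume] fun z ↦ w z * g z.1 * g z.2 := by
    rw [Measure.volume_eq_prod]
    filter_upwards [Measure.quasiMeasurePreserving_fst.ae_eq_comp hνg,
      Measure.quasiMeasurePreserving_snd.ae_eq_comp hνg] with z h₁ h₂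
    simp only [Function.comp_apply] at h₁ h₂
    rw [h₁, h₂]
  have hnonneg : ∀ z : ℝ × ℝ, 0 ≤ w z * g z.1 := fun z ↦ mul_nonneg (hw₀ z) (hg₀ _)
  rw [integral_congr_ae hae, ofReal_integral_eq_lintegral_ofReal ((integrable_congr hae).mp hint)
    (.of_forall fun z ↦ mul_nonneg (hnonneg z) (hg₀ _))]
  simp only [ENNReal.ofReal_mul (hnonneg _), ENNReal.ofReal_mul (hw₀ _)]

theorem ofReal_integral_integral_eq_lintegral_lintegral {α β : Type*} [MeasurableSpace α]
    [MeasurableSpace β] {μ : Measure α} {τ : Measure β} [SFinite μ] [SFinite τ]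
    {F : α → β → ℝ} (hF : Measurable (Function.uncurry F)) (hF₀ : ∀ x y, 0 ≤ F x y)
    (hfin : ∫⁻ x, ∫⁻ y, ENNReal.ofReal (F x y) ∂τ ∂μ ≠ ∞) :
    ENNReal.ofReal (∫ x, ∫ y, F x y ∂τ ∂μ) = ∫⁻ x, ∫⁻ y, ENNReal.ofReal (F x y) ∂τ ∂μ := by
  have hF₀' : 0 ≤ᵐ[μ.prod τ] Function.uncurry F := .of_forall fun z ↦ hF₀ z.1 z.2
  have hlint : ∫⁻ z, ENNReal.ofReal (Function.uncurry F z) ∂μ.prod τ =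
      ∫⁻ x, ∫⁻ y, ENNReal.ofReal (F x y) ∂τ ∂μ :=
    lintegral_prod _ (by fun_prop)
  have hint : Integrable (Function.uncurry F) (μ.prod τ) :=
    ⟨hF.aestronglyMeasurable, (hasFiniteIntegral_iff_ofReal hF₀').mpr (hlint ▸ hfin.lt_top)⟩
  rw [integral_integral hint]
  exact (ofReal_integral_eq_lintegral_ofReal hint hF₀').trans hlint

theorem lintegral_lintegral_shear {F : ℝ → ℝ → ℝ≥0∞} (hF : Measurable (Function.uncurry F))
    (t : ℝ) : ∫⁻ p, ∫⁻ q, F p q = ∫⁻ a, ∫⁻ b, F (a + t * (b - a)) (b - a) := by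
  calc ∫⁻ p, ∫⁻ q, F p q = ∫⁻ q, ∫⁻ p, F p q := lintegral_lintegral_swap hF.aemeasurable
    _ = ∫⁻ q, ∫⁻ a, F (a + t * q) q :=
        lintegral_congr fun q ↦ (lintegral_add_right_eq_self (F · q) (t * q)).symm
    _ = ∫⁻ a, ∫⁻ q, F (a + t * q) q :=
        lintegral_lintegral_swap (by fun_prop)
    _ = ∫⁻ a, ∫⁻ b, F (a + t * (b - a)) (b - a) := lintegral_congr fun a ↦ by
        simpa [sub_eq_add_neg] using
          (lintegral_add_right_eq_self (fun q ↦ F (a + t * q) q) (-a)).symm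

theorem lintegral_mul_lintegral_shear {g u c : ℝ → ℝ≥0∞} (hg : Measurable g) (hu : Measurable u)
    (hc : Measurable c) (τ : Measure ℝ) [SFinite τ] :
    ∫⁻ p, u p * ∫⁻ q, ∫⁻ t, c q * g (p - t * q) * g (p - t * q + q) ∂τ =
      ∫⁻ a, ∫⁻ b, c (b - a) * (∫⁻ t, u (a + t * (b - a)) ∂τ) * g a * g b := by
  calc ∫⁻ p, u p * ∫⁻ q, ∫⁻ t, c q * g (p - t * q) * g (p - t * q + q) ∂τ
      = ∫⁻ p, ∫⁻ q, ∫⁻ t, u p * (c q * g (p - t * q) * g (p - t * q + q)) ∂τ := by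
        refine lintegral_congr fun p ↦ ?_
        rw [← lintegral_const_mul _ (by fun_prop)]
        exact lintegral_congr fun q ↦ (lintegral_const_mul _ (by fun_prop)).symm
    _ = ∫⁻ p, ∫⁻ t, (∫⁻ q, u p * (c q * g (p - t * q) * g (p - t * q + q))) ∂τ :=
        lintegral_congr fun p ↦ lintegral_lintegral_swap (by fun_prop)
    _ = ∫⁻ t, (∫⁻ p, ∫⁻ q, u p * (c q * g (p - t * q) * g (p - t * q + q))) ∂τ :=
        lintegral_lintegral_swap (by fun_prop)
    _ = ∫⁻ t, (∫⁻ a, ∫⁻ b, u (a + t * (b - a)) * (c (b - a) * g a * g b)) ∂τ := by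
        refine lintegral_congr fun t ↦ ?_
        rw [lintegral_lintegral_shear (by fun_prop) t]
        simp only [add_sub_cancel_right, add_sub_cancel]
    _ = ∫⁻ a, ∫⁻ t, (∫⁻ b, u (a + t * (b - a)) * (c (b - a) * g a * g b)) ∂τ :=
        lintegral_lintegral_swap (by fun_prop)
    _ = ∫⁻ a, ∫⁻ b, ∫⁻ t, u (a + t * (b - a)) * (c (b - a) * g a * g b) ∂τ :=
        lintegral_congr fun a ↦ lintegral_lintegral_swap (by fun_prop)
    _ = ∫⁻ a, ∫⁻ b, c (b - a) * (∫⁻ t, u (a + t * (b - a)) ∂τ) * g a * g b := by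
        refine lintegral_congr fun a ↦ lintegral_congr fun b ↦ ?_
        rw [lintegral_mul_const _ (by fun_prop)]
        ring

theorem ae_ofReal_eq_lintegral_of_char {ν g c : ℝ → ℝ} (hg : Measurable g) (hg₀ : 0 ≤ g)
    (hνg : ν =ᵐ[volume] g) (hc : Measurable c) (hc₀ : 0 ≤ c)
    (hchar : ∀ p, ν p = ∫ q, ∫ t in (0 : ℝ)..1, c q * ν (p - t * q) * ν (p - t * q + q))
    (hint : Integrable fun z : ℝ × ℝ ↦ c (z.2 - z.1) * ν z.1 * ν z.2) :
    ∀ᵐ p, ENNReal.ofReal (ν p) = ∫⁻ q, ∫⁻ t in Ioc (0 : ℝ) 1, ENNReal.ofReal (c q) *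
      ENNReal.ofReal (g (p - t * q)) * ENNReal.ofReal (g (p - t * q + q)) := by
  set τ := volume.restrict (Ioc (0 : ℝ) 1)
  -- finiteness of the total mass makes the Bochner integrals in `hchar` genuine for a.e. `p`
  have htotal : ∫⁻ p, ∫⁻ q, ∫⁻ t, ENNReal.ofReal (c q) * ENNReal.ofReal (g (p - t * q)) *
      ENNReal.ofReal (g (p - t * q + q)) ∂τ ≠ ∞ := by
    have h := lintegral_mul_lintegral_shear (g := fun x ↦ ENNReal.ofReal (g x)) (u := 1)
      (c := fun x ↦ ENNReal.ofReal (c x)) (by fun_prop) measurable_const (by fun_prop) τ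
    have hτ : τ univ = 1 := by simp [τ]
    have hprod := ofReal_integral_mul_mul_eq_lintegral hg₀ hνg (fun z ↦ hc₀ _) hint
    rw [Measure.volume_eq_prod, lintegral_prod _ (by fun_prop)] at hprod
    simp only [Pi.one_apply, one_mul, lintegral_const, hτ, mul_one] at h
    rw [h, ← hprod]
    exact ENNReal.ofReal_ne_top
  have hsections : ∀ᵐ p, ∀ᵐ z ∂volume.prod τ, ν (p - z.2 * z.1) = g (p - z.2 * z.1) ∧
      ν (p - z.2 * z.1 + z.1) = g (p - z.2 * z.1 + z.1) := by
    have hae : ∀ᵐ x : ℝ × (ℝ × ℝ) ∂volume.prod (volume.prod τ),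
        ν (x.1 - x.2.2 * x.2.1) = g (x.1 - x.2.2 * x.2.1) ∧
          ν (x.1 - x.2.2 * x.2.1 + x.2.1) = g (x.1 - x.2.2 * x.2.1 + x.2.1) := by
      filter_upwards
        [(quasiMeasurePreserving_fst_add (volume.prod τ) (f := fun w ↦ -(w.2 * w.1))
          (by fun_prop)).ae_eq_comp hνg,
        (quasiMeasurePreserving_fst_add (volume.prod τ) (f := fun w ↦ w.1 - w.2 * w.1)
          (by fun_prop)).ae_eq_comp hνg] with x h₁ h₂
      simp only [Function.comp_apply, ← sub_eq_add_neg, ← add_sub_assoc, add_sub_right_comm]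
        at h₁ h₂
      exact ⟨h₁, h₂⟩
    exact Measure.ae_ae_of_ae_prod hae
  filter_upwards [ae_lt_top (by fun_prop) htotal, hsections] with p hfin hsec
  have hsplit : ∀ q t, ENNReal.ofReal (c q * g (p - t * q) * g (p - t * q + q)) =
      ENNReal.ofReal (c q) * ENNReal.ofReal (g (p - t * q)) * ENNReal.ofReal (g (p - t * q + q)) :=
    fun q t ↦ by rw [ENNReal.ofReal_mul (mul_nonneg (hc₀ q) (hg₀ _)), ENNReal.ofReal_mul (hc₀ q)]
  have hνp : ν p = ∫ q, ∫ t, c q * g (p - t * q) * g (p - t * q + q) ∂τ := by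
    rw [hchar p]
    refine integral_congr_ae ?_
    filter_upwards [Measure.ae_ae_of_ae_prod hsec] with q hq
    rw [intervalIntegral.integral_of_le zero_le_one]
    refine integral_congr_ae ?_
    filter_upwards [hq] with t ht
    rw [ht.1, ht.2]
  rw [hνp, ofReal_integral_integral_eq_lintegral_lintegral (by fun_prop)
    (fun q t ↦ mul_nonneg (mul_nonneg (hc₀ q) (hg₀ _)) (hg₀ _))
    (by simpa only [hsplit] using hfin.ne)]
  simp only [hsplit]

theorem lintegral_mul_ofReal_eq_of_char {ν g c : ℝ → ℝ} (hg : Measurable g) (hg₀ : 0 ≤ g)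
    (hνg : ν =ᵐ[volume] g) (hc : Measurable c) (hc₀ : 0 ≤ c)
    (hchar : ∀ p, ν p = ∫ q, ∫ t in (0 : ℝ)..1, c q * ν (p - t * q) * ν (p - t * q + q))
    (hint : Integrable fun z : ℝ × ℝ ↦ c (z.2 - z.1) * ν z.1 * ν z.2)
    {u : ℝ → ℝ≥0∞} (hu : Measurable u) :
    ∫⁻ p, u p * ENNReal.ofReal (ν p) = ∫⁻ a, ∫⁻ b, ENNReal.ofReal (c (b - a)) *
      (∫⁻ t in Ioc (0 : ℝ) 1, u (a + t * (b - a))) *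
        ENNReal.ofReal (g a) * ENNReal.ofReal (g b) := by
  rw [← lintegral_mul_lintegral_shear (g := fun x ↦ ENNReal.ofReal (g x))
    (c := fun x ↦ ENNReal.ofReal (c x)) (by fun_prop) hu (by fun_prop)]
  refine lintegral_congr_ae ?_
  filter_upwards [ae_ofReal_eq_lintegral_of_char hg hg₀ hνg hc hc₀ hchar hint] with p hp
  rw [hp]

theorem lintegral_invSlope_le_of_char {ν g c : ℝ → ℝ} (hg : Measurable g) (hg₀ : 0 ≤ g)
    (hνg : ν =ᵐ[volume] g) (hc : Measurable c) (hc₀ : 0 ≤ c)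
    (hchar : ∀ p, ν p = ∫ q, ∫ t in (0 : ℝ)..1, c q * ν (p - t * q) * ν (p - t * q + q))
    (hint : Integrable fun z : ℝ × ℝ ↦ c (z.2 - z.1) * ν z.1 * ν z.2)
    {φ : ℝ → ℝ} (hφ : ContDiff ℝ 1 φ) (hφ' : ∀ x, 0 < deriv φ x)
    (hint₁ : Integrable fun a ↦ (deriv φ a)⁻¹ * ν a) :
    ∫⁻ z : ℝ × ℝ, ENNReal.ofReal (c (z.2 - z.1) * invSlope φ z.1 z.2) *
        ENNReal.ofReal (g z.1) * ENNReal.ofReal (g z.2) ≤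
      ENNReal.ofReal (∫ a, (deriv φ a)⁻¹ * ν a) := by
  have hσ : Continuous fun x ↦ (deriv φ x)⁻¹ :=
    (hφ.continuous_deriv le_rfl).inv₀ fun x ↦ (hφ' x).ne'
  set U : ℝ → ℝ≥0∞ := fun x ↦ ENNReal.ofReal (deriv φ x)⁻¹
  have hU : Measurable U := hσ.measurable.ennreal_ofReal
  have hslope : ∀ a b,
      ENNReal.ofReal (invSlope φ a b) ≤ ∫⁻ t in Ioc (0 : ℝ) 1, U (a + t * (b - a)) :=
    fun a b ↦ (ENNReal.ofReal_le_ofReal (invSlope_le_integral_inv_deriv hφ hφ' a b)).trans_eq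
      (ofReal_integral_eq_lintegral_ofReal (hσ.comp (by fun_prop)).integrableOn_Ioc
        (.of_forall fun t ↦ inv_nonneg.mpr (hφ' _).le))
  calc ∫⁻ z : ℝ × ℝ, ENNReal.ofReal (c (z.2 - z.1) * invSlope φ z.1 z.2) *
        ENNReal.ofReal (g z.1) * ENNReal.ofReal (g z.2)
      ≤ ∫⁻ z : ℝ × ℝ, ENNReal.ofReal (c (z.2 - z.1)) *
          (∫⁻ t in Ioc (0 : ℝ) 1, U (z.1 + t * (z.2 - z.1))) *
          ENNReal.ofReal (g z.1) * ENNReal.ofReal (g z.2) := lintegral_mono fun z ↦ by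
        rw [ENNReal.ofReal_mul (hc₀ _)]
        gcongr
        exact hslope z.1 z.2
    _ = ∫⁻ p, U p * ENNReal.ofReal (ν p) := by
        rw [lintegral_mul_ofReal_eq_of_char hg hg₀ hνg hc hc₀ hchar hint hU,
          Measure.volume_eq_prod, lintegral_prod _ (by fun_prop)]
    _ = ENNReal.ofReal (∫ a, (deriv φ a)⁻¹ * ν a) := by
        have hnonneg : 0 ≤ᵐ[volume] fun a ↦ (deriv φ a)⁻¹ * ν a := by
          filter_upwards [hνg] with a ha
          rw [ha]
          exact mul_nonneg (inv_nonneg.mpr (hφ' a).le) (hg₀ a)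
        rw [ofReal_integral_eq_lintegral_ofReal hint₁ hnonneg]
        exact lintegral_congr fun a ↦ (ENNReal.ofReal_mul (inv_nonneg.mpr (hφ' a).le)).symm

theorem integral_invSlope_add_integral_sq_le {χ : ℝ} (hχ : 0 ≤ χ) {ν : ℝ → ℝ}
    (hν₀ : ∀ x, 0 ≤ ν x) (hν : Integrable ν)
    (hchar : ∀ p, ν p = ∫ q, ∫ t in (0 : ℝ)..1,
      (χ + q ^ 2 / 2) * ν (p - t * q) * ν (p - t * q + q))
    (hsq : Integrable fun z : ℝ × ℝ ↦ (z.2 - z.1) ^ 2 * ν z.1 * ν z.2)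
    {φ : ℝ → ℝ} (hφ : ContDiff ℝ 1 φ) (hφ' : ∀ x, 0 < deriv φ x)
    (hint₁ : Integrable fun a ↦ (deriv φ a)⁻¹ * ν a)
    (hint₂ : Integrable fun z : ℝ × ℝ ↦ invSlope φ z.1 z.2 * ν z.1 * ν z.2)
    (hint₃ : Integrable fun z : ℝ × ℝ ↦ (φ z.1 - φ z.2) * (z.1 - z.2) * ν z.1 * ν z.2) :
    χ * (∫ z : ℝ × ℝ, invSlope φ z.1 z.2 * ν z.1 * ν z.2) +
        ∫ z : ℝ × ℝ, (z.2 - z.1) ^ 2 * ν z.1 * ν z.2 ≤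
      (∫ a, (deriv φ a)⁻¹ * ν a) +
        1 / 2 * ∫ z : ℝ × ℝ, (φ z.1 - φ z.2) * (z.1 - z.2) * ν z.1 * ν z.2 := by
  obtain ⟨g, hg, hg₀, hνg⟩ := hν.aemeasurable.exists_measurable_nonneg (.of_forall hν₀)
  have hmono : StrictMono φ := strictMono_of_deriv_pos hφ'
  have hφm : Measurable φ := hφ.continuous.measurable
  have hs₀ : ∀ z : ℝ × ℝ, 0 ≤ (φ z.1 - φ z.2) * (z.1 - z.2) / 2 := fun z ↦
    div_nonneg ((hmono.monotone.monovary monotone_id).sub_mul_sub_nonneg z.2 z.1) zero_le_two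
  have hK₀ : ∀ z : ℝ × ℝ, 0 ≤ invSlope φ z.1 z.2 := fun z ↦
    invSlope_nonneg hmono.monotone (fun x ↦ (hφ' x).le) _ _
  have hνν : Integrable fun z : ℝ × ℝ ↦ ν z.1 * ν z.2 := by
    rw [Measure.volume_eq_prod]
    exact hν.mul_prod hν
  have hc_int : Integrable fun z : ℝ × ℝ ↦ (χ + (z.2 - z.1) ^ 2 / 2) * ν z.1 * ν z.2 :=
    ((hνν.const_mul χ).add (hsq.div_const 2)).congr
      (.of_forall fun z ↦ by simp only [Pi.add_apply]; ring)
  have hw_int : Integrable fun z : ℝ × ℝ ↦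
      (χ * invSlope φ z.1 z.2 + (z.2 - z.1) ^ 2) * ν z.1 * ν z.2 :=
    ((hint₂.const_mul χ).add hsq).congr (.of_forall fun z ↦ by simp only [Pi.add_apply]; ring)
  have hs_int : Integrable fun z : ℝ × ℝ ↦
      (φ z.1 - φ z.2) * (z.1 - z.2) / 2 * ν z.1 * ν z.2 :=
    (hint₃.div_const 2).congr (.of_forall fun z ↦ by ring)
  have hlhs : χ * (∫ z : ℝ × ℝ, invSlope φ z.1 z.2 * ν z.1 * ν z.2) +
      ∫ z : ℝ × ℝ, (z.2 - z.1) ^ 2 * ν z.1 * ν z.2 =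
        ∫ z : ℝ × ℝ, (χ * invSlope φ z.1 z.2 + (z.2 - z.1) ^ 2) * ν z.1 * ν z.2 := by
    rw [← integral_const_mul, ← integral_add (hint₂.const_mul χ) hsq]
    congr 1 with z
    ring
  have hrhs : 1 / 2 * ∫ z : ℝ × ℝ, (φ z.1 - φ z.2) * (z.1 - z.2) * ν z.1 * ν z.2 =
      ∫ z : ℝ × ℝ, (φ z.1 - φ z.2) * (z.1 - z.2) / 2 * ν z.1 * ν z.2 := by
    rw [← integral_const_mul]
    congr 1 with z
    ring
  have hI₁ : 0 ≤ ∫ a, (deriv φ a)⁻¹ * ν a :=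
    integral_nonneg fun a ↦ mul_nonneg (inv_nonneg.mpr (hφ' a).le) (hν₀ a)
  have hI₃ : 0 ≤ ∫ z : ℝ × ℝ, (φ z.1 - φ z.2) * (z.1 - z.2) / 2 * ν z.1 * ν z.2 :=
    integral_nonneg fun z ↦ mul_nonneg (mul_nonneg (hs₀ z) (hν₀ _)) (hν₀ _)
  rw [hlhs, hrhs, ← ENNReal.ofReal_le_ofReal_iff (add_nonneg hI₁ hI₃),
    ENNReal.ofReal_add hI₁ hI₃,
    ofReal_integral_mul_mul_eq_lintegral hg₀ hνg
      (fun z ↦ add_nonneg (mul_nonneg hχ (hK₀ z)) (sq_nonneg _)) hw_int,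
    ofReal_integral_mul_mul_eq_lintegral hg₀ hνg hs₀ hs_int]
  calc ∫⁻ z : ℝ × ℝ, ENNReal.ofReal (χ * invSlope φ z.1 z.2 + (z.2 - z.1) ^ 2) *
        ENNReal.ofReal (g z.1) * ENNReal.ofReal (g z.2)
      ≤ ∫⁻ z : ℝ × ℝ, (ENNReal.ofReal ((χ + (z.2 - z.1) ^ 2 / 2) * invSlope φ z.1 z.2) *
          ENNReal.ofReal (g z.1) * ENNReal.ofReal (g z.2) +
        ENNReal.ofReal ((φ z.1 - φ z.2) * (z.1 - z.2) / 2) *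
          ENNReal.ofReal (g z.1) * ENNReal.ofReal (g z.2)) := lintegral_mono fun z ↦ by
        rw [← add_mul, ← add_mul]
        gcongr
        refine (ENNReal.ofReal_le_ofReal ?_).trans ENNReal.ofReal_add_le
        have hamgm := sq_sub_le_invSlope_add hmono z.1 z.2
        rw [← neg_sub z.2 z.1, neg_sq] at hamgm
        linarith
    _ = _ := lintegral_add_right _ (by fun_prop)
    _ ≤ _ := add_le_add (lintegral_invSlope_le_of_char hg hg₀ hνg
        (c := fun q ↦ χ + q ^ 2 / 2) (by fun_prop) (fun q ↦ by positivity) hchar hc_int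
        hφ hφ' hint₁) le_rfl

theorem dissipation_inequality_subcritical_general (χ : ℝ) (hχ0 : 0 < χ) (hχ1 : χ < 1)
    (ν : ℝ → ℝ) (hν0 : ∀ x, 0 < ν x)
    (hmass : (∫ a : ℝ, ν a) = 1)
    (hcm : (∫ a : ℝ, a * ν a) = 0)
    (hchar : ∀ p : ℝ, ν p =
      ∫ q : ℝ, ∫ t in (0 : ℝ)..1,
        (χ + q ^ 2 / 2) * ν (p - t * q) * ν (p - t * q + q))
    (hmom2 : (∫ a : ℝ, a ^ 2 * ν a) = 1 - χ)
    (ψ : ℝ → ℝ) (hψ : ContDiff ℝ 2 ψ)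
    (hψ'' : ∀ a, 0 < deriv (deriv ψ) a)
    (hint1 : Integrable (fun a : ℝ => (deriv (deriv ψ) a)⁻¹ * ν a))
    (hint2 : Integrable (fun p : ℝ × ℝ =>
      (if p.1 = p.2 then (deriv (deriv ψ) p.1)⁻¹
        else (p.1 - p.2) / (deriv ψ p.1 - deriv ψ p.2)) * ν p.1 * ν p.2))
    (hint3 : Integrable (fun p : ℝ × ℝ =>
      (deriv ψ p.1 - deriv ψ p.2) * (p.1 - p.2) * ν p.1 * ν p.2))
    (hint4 : Integrable (fun a : ℝ => a * deriv ψ a * ν a))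
    (hint5 : Integrable (fun a : ℝ => (deriv ψ a) ^ 2 * ν a)) :
    -(∫ a : ℝ, (deriv (deriv ψ) a)⁻¹ * ν a) +
        χ * (∫ p : ℝ × ℝ,
          (if p.1 = p.2 then (deriv (deriv ψ) p.1)⁻¹
            else (p.1 - p.2) / (deriv ψ p.1 - deriv ψ p.2)) * ν p.1 * ν p.2) -
        (1 / 2) * (∫ p : ℝ × ℝ,
          (deriv ψ p.1 - deriv ψ p.2) * (p.1 - p.2) * ν p.1 * ν p.2) +
        2 * (∫ a : ℝ, a * deriv ψ a * ν a) + (1 - χ) -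
        (∫ a : ℝ, (deriv ψ a) ^ 2 * ν a) ≤
      -∫ a : ℝ, (deriv ψ a - a) ^ 2 * ν a := by
  have hν : Integrable ν := .of_integral_ne_zero (by simp [hmass])
  have hν₂ : Integrable fun a ↦ a ^ 2 * ν a := .of_integral_ne_zero (by rw [hmom2]; linarith)
  obtain ⟨hsq, hsq_eq⟩ := integral_sq_sub_mul_mul hν hν₂ hmass hcm
  have hkey := integral_invSlope_add_integral_sq_le hχ0.le (fun x ↦ (hν0 x).le) hν hchar hsq
    (hψ.deriv' (n := 1)) hψ'' hint1 hint2 hint3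
  have hexpand : ∫ a, (deriv ψ a - a) ^ 2 * ν a =
      (∫ a, (deriv ψ a) ^ 2 * ν a) - 2 * (∫ a, a * deriv ψ a * ν a) + ∫ a, a ^ 2 * ν a := by
    have h : Integrable fun a ↦ (deriv ψ a) ^ 2 * ν a - 2 * (a * deriv ψ a * ν a) :=
      hint5.sub (hint4.const_mul 2)
    rw [← integral_const_mul, ← integral_sub hint5 (hint4.const_mul 2), ← integral_add h hν₂]
    congr 1 with a
    ring
  unfold invSlope at hkey
  linarith

/-- Key dissipation inequality yielding exponential contraction of the
Wasserstein distance towards self-similarity for the subcritical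
one-dimensional Keller–Segel equation. Here `ν` is the rescaled equilibrium
(a positive probability density with zero center of mass, satisfying its
characterization identity and with second moment `1 − χ`), and `ψ'` is a
smooth optimal transport map with `ψ'' > 0`. The difference quotient
`(a−b)/(ψ'(a)−ψ'(b))` is read as `1/ψ''(a)` on the diagonal. -/
theorem dissipation_inequality_subcritical (χ : ℝ) (hχ0 : 0 < χ) (hχ1 : χ < 1)
    (ν : ℝ → ℝ) (hν0 : ∀ x, 0 < ν x)
    (hmass : (∫ a : ℝ, ν a) = 1)
    (hcm : (∫ a : ℝ, a * ν a) = 0)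
    (hchar : ∀ p : ℝ, ν p =
      ∫ q : ℝ, ∫ t in (0 : ℝ)..1,
        (χ + q ^ 2 / 2) * ν (p - t * q) * ν (p - t * q + q))
    (hmom2 : (∫ a : ℝ, a ^ 2 * ν a) = 1 - χ)
    (ψ : ℝ → ℝ) (hψ : ContDiff ℝ 2 ψ)
    (hψ'' : ∀ a, 0 < deriv (deriv ψ) a)
    (hint1 : Integrable (fun a : ℝ => (deriv (deriv ψ) a)⁻¹ * ν a))
    (hint2 : Integrable (fun p : ℝ × ℝ =>
      (if p.1 = p.2 then (deriv (deriv ψ) p.1)⁻¹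
        else (p.1 - p.2) / (deriv ψ p.1 - deriv ψ p.2)) * ν p.1 * ν p.2))
    (hint3 : Integrable (fun p : ℝ × ℝ =>
      (deriv ψ p.1 - deriv ψ p.2) * (p.1 - p.2) * ν p.1 * ν p.2))
    (hint4 : Integrable (fun a : ℝ => a * deriv ψ a * ν a))
    (hint5 : Integrable (fun a : ℝ => (deriv ψ a) ^ 2 * ν a))
    (hint6 : Integrable (fun a : ℝ => (deriv ψ a - a) ^ 2 * ν a)) :
    -(∫ a : ℝ, (deriv (deriv ψ) a)⁻¹ * ν a) +
        χ * (∫ p : ℝ × ℝ,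
          (if p.1 = p.2 then (deriv (deriv ψ) p.1)⁻¹
            else (p.1 - p.2) / (deriv ψ p.1 - deriv ψ p.2)) * ν p.1 * ν p.2) -
        (1 / 2) * (∫ p : ℝ × ℝ,
          (deriv ψ p.1 - deriv ψ p.2) * (p.1 - p.2) * ν p.1 * ν p.2) +
        2 * (∫ a : ℝ, a * deriv ψ a * ν a) + (1 - χ) -
        (∫ a : ℝ, (deriv ψ a) ^ 2 * ν a) ≤
      -∫ a : ℝ, (deriv ψ a - a) ^ 2 * ν a :=
  dissipation_inequality_subcritical_general χ hχ0 hχ1 ν hν0 hmass hcm hchar hmom2 ψ hψ hψ'' hint1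
    hint2 hint3 hint4 hint5
end

section
/- Let 0 < χ < 1 and let ν : ℝ → [0,∞) be a probability density with finite second moment which is a weak stationary state of the rescaled one-dimensional modified Keller–Segel equation, i.e., for every twice continuously differentiable test function φ with bounded, Lipschitz derivative, ∫_ℝ φ''(x) ν(x) dx = χ ∬_{ℝ×ℝ} ((φ'(x) − φ'(y))/(x − y)) ν(x)ν(y) dx dy + ∫_ℝ φ'(x) x ν(x) dx, with the quotient understood as φ''(x) when x = y. Then the second moment of ν equals 1 − χ: ∫_ℝ x² ν(x) dx = 1 − χ. -/
/-!
Formally, the test function `x ^ 2 / 2` turns the stationarity identity into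
`∫ ν = χ (∫ ν)² + ∫ x² ν`, i.e. `1 = χ + ∫ x² ν`, because its difference quotient is
identically `1`. Its derivative is unbounded, so we test with `-cos (ε x) / ε ^ 2` instead.
Using `sin (ε x) / ε = x sinc (ε x)` and the sum-to-product formula for the difference quotient,
every integrand of the resulting identity is an integrable weight (`ν`, `ν ⊗ ν` or `x² ν`)
times a continuous function of `ε` bounded by `1` that equals `1` at `ε = 0`,
so dominated convergence as `ε → 0` gives the formal identity.
-/

open MeasureTheory Real
open Filter Topology

theorem tendsto_integral_mul_of_abs_le_one {ι α : Type*} [MeasurableSpace α] {μ : Measure α}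
    {l : Filter ι} [l.IsCountablyGenerated] {F : ι → α → ℝ} {w : α → ℝ}
    (hw : Integrable w μ) (hF_meas : ∀ i, AEStronglyMeasurable (F i) μ)
    (hF_le : ∀ i x, |F i x| ≤ 1) (hF_lim : ∀ x, Tendsto (F · x) l (𝓝 1)) :
    Tendsto (fun i => ∫ x, F i x * w x ∂μ) l (𝓝 (∫ x, w x ∂μ)) := by
  refine tendsto_integral_filter_of_dominated_convergence (fun x => ‖w x‖)
    (.of_forall fun i => (hF_meas i).mul hw.1) (.of_forall fun i => .of_forall fun x => ?_)
    hw.norm (.of_forall fun x => by simpa using (hF_lim x).mul_const (w x))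
  rw [norm_mul, Real.norm_eq_abs]
  exact mul_le_of_le_one_left (norm_nonneg _) (hF_le i x)

section Limits

variable {w : ℝ → ℝ}

theorem tendsto_integral_cos_mul (hw : Integrable w) :
    Tendsto (fun ε => ∫ x, cos (ε * x) * w x) (𝓝 0) (𝓝 (∫ x, w x)) :=
  tendsto_integral_mul_of_abs_le_one hw
    (fun ε => (by fun_prop : Continuous fun x => cos (ε * x)).aestronglyMeasurable)
    (fun _ _ => abs_cos_le_one _)
    (fun x => (by fun_prop : Continuous fun ε => cos (ε * x)).tendsto' 0 1 (by simp))

theorem tendsto_integral_sinc_mul (hw : Integrable w) :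
    Tendsto (fun ε => ∫ x, sinc (ε * x) * w x) (𝓝 0) (𝓝 (∫ x, w x)) :=
  tendsto_integral_mul_of_abs_le_one hw
    (fun ε => (continuous_sinc.comp (continuous_const_mul ε)).aestronglyMeasurable)
    (fun _ _ => abs_sinc_le_one _)
    (fun x => (continuous_sinc.comp (continuous_mul_const x)).tendsto' 0 1 (by simp))

theorem tendsto_integral_cos_mul_sinc_mul {w : ℝ × ℝ → ℝ} (hw : Integrable w) :
    Tendsto (fun ε => ∫ p : ℝ × ℝ, cos (ε * (p.1 + p.2) / 2) * sinc (ε * (p.1 - p.2) / 2) * w p)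
      (𝓝 0) (𝓝 (∫ p, w p)) :=
  tendsto_integral_mul_of_abs_le_one hw
    (fun ε => ((by fun_prop : Continuous fun p : ℝ × ℝ => cos (ε * (p.1 + p.2) / 2)).mul
      (continuous_sinc.comp (by fun_prop))).aestronglyMeasurable)
    (fun _ _ => by
      rw [abs_mul]
      exact mul_le_one₀ (abs_cos_le_one _) (abs_nonneg _) (abs_sinc_le_one _))
    (fun p => ((by fun_prop : Continuous fun ε => cos (ε * (p.1 + p.2) / 2)).mul
      (continuous_sinc.comp (by fun_prop))).tendsto' 0 1 (by simp))

end Limits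

noncomputable def scaledCos (ε x : ℝ) : ℝ := -cos (ε * x) / ε ^ 2

section ScaledCos

variable {ε : ℝ}

theorem hasDerivAt_scaledCos (hε : ε ≠ 0) (x : ℝ) :
    HasDerivAt (scaledCos ε) (sin (ε * x) / ε) x := by
  refine ((hasDerivAt_const_mul (x := x) ε).cos.neg.div_const (ε ^ 2)).congr_deriv ?_
  field_simp

theorem deriv_scaledCos (hε : ε ≠ 0) : deriv (scaledCos ε) = fun x => sin (ε * x) / ε :=
  funext fun x => (hasDerivAt_scaledCos hε x).deriv

theorem hasDerivAt_sin_mul_div (hε : ε ≠ 0) (x : ℝ) :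
    HasDerivAt (fun x => sin (ε * x) / ε) (cos (ε * x)) x := by
  refine ((hasDerivAt_const_mul (x := x) ε).sin.div_const ε).congr_deriv ?_
  field_simp

theorem deriv_deriv_scaledCos (hε : ε ≠ 0) :
    deriv (deriv (scaledCos ε)) = fun x => cos (ε * x) := by
  rw [deriv_scaledCos hε]
  exact funext fun x => (hasDerivAt_sin_mul_div hε x).deriv

theorem contDiff_scaledCos : ContDiff ℝ 2 (scaledCos ε) := by
  unfold scaledCos
  fun_prop

theorem abs_deriv_scaledCos_le (hε : ε ≠ 0) (x : ℝ) : |deriv (scaledCos ε) x| ≤ |ε|⁻¹ := by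
  rw [deriv_scaledCos hε, abs_div, div_eq_mul_inv]
  exact mul_le_of_le_one_left (by positivity) (abs_sin_le_one _)

theorem lipschitzWith_deriv_scaledCos (hε : ε ≠ 0) : LipschitzWith 1 (deriv (scaledCos ε)) := by
  rw [deriv_scaledCos hε]
  refine lipschitzWith_of_nnnorm_deriv_le
    (fun x => (hasDerivAt_sin_mul_div hε x).differentiableAt) fun x => ?_
  rw [(hasDerivAt_sin_mul_div hε x).deriv, ← NNReal.coe_le_coe, coe_nnnorm]
  exact abs_cos_le_one _

theorem sin_mul_div_mul_eq_sinc_mul_sq (hε : ε ≠ 0) (x : ℝ) :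
    sin (ε * x) / ε * x = sinc (ε * x) * x ^ 2 := by
  rcases eq_or_ne x 0 with rfl | hx
  · simp
  · rw [sinc_of_ne_zero (mul_ne_zero hε hx)]
    field_simp

theorem ite_diffQuot_sin_mul_div (hε : ε ≠ 0) (x y : ℝ) :
    (if x = y then cos (ε * x) else (sin (ε * x) / ε - sin (ε * y) / ε) / (x - y)) =
      cos (ε * (x + y) / 2) * sinc (ε * (x - y) / 2) := by
  split_ifs with hxy
  · subst hxy
    rw [← two_mul, mul_left_comm, mul_div_cancel_left₀ _ two_ne_zero, sub_self, mul_zero,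
      zero_div, sinc_zero, mul_one]
  · have hxy' : x - y ≠ 0 := sub_ne_zero.mpr hxy
    rw [sinc_of_ne_zero (by positivity), ← sub_div, sin_sub_sin]
    field_simp

end ScaledCos

def IsWeakStationaryState (χ : ℝ) (ν : ℝ → ℝ) : Prop :=
  ∀ φ : ℝ → ℝ, ContDiff ℝ 2 φ →
    (∃ C : ℝ, ∀ x, |deriv φ x| ≤ C) →
    (∃ L : NNReal, LipschitzWith L (deriv φ)) →
    (∫ x : ℝ, deriv (deriv φ) x * ν x) =
      χ * (∫ p : ℝ × ℝ,
        (if p.1 = p.2 then deriv (deriv φ) p.1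
          else (deriv φ p.1 - deriv φ p.2) / (p.1 - p.2)) * ν p.1 * ν p.2) +
        ∫ x : ℝ, deriv φ x * x * ν x

theorem IsWeakStationaryState.integral_cos_mul {χ : ℝ} {ν : ℝ → ℝ}
    (hν : IsWeakStationaryState χ ν) {ε : ℝ} (hε : ε ≠ 0) :
    (∫ x, cos (ε * x) * ν x) =
      χ * (∫ p : ℝ × ℝ, cos (ε * (p.1 + p.2) / 2) * sinc (ε * (p.1 - p.2) / 2) *
        (ν p.1 * ν p.2)) + ∫ x, sinc (ε * x) * (x ^ 2 * ν x) := by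
  have h := hν (scaledCos ε) contDiff_scaledCos ⟨_, abs_deriv_scaledCos_le hε⟩
    ⟨1, lipschitzWith_deriv_scaledCos hε⟩
  rw [deriv_deriv_scaledCos hε, deriv_scaledCos hε] at h
  simpa only [ite_diffQuot_sin_mul_div hε, sin_mul_div_mul_eq_sinc_mul_sq hε, mul_assoc] using h

theorem second_moment_of_stationary_state_general (χ : ℝ) (ν : ℝ → ℝ)
    (hmass : (∫ x : ℝ, ν x) = 1)
    (hmom2 : Integrable (fun x : ℝ => x ^ 2 * ν x))
    (hstat : ∀ φ : ℝ → ℝ, ContDiff ℝ 2 φ →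
      (∃ C : ℝ, ∀ x, |deriv φ x| ≤ C) →
      (∃ L : NNReal, LipschitzWith L (deriv φ)) →
      (∫ x : ℝ, deriv (deriv φ) x * ν x) =
        χ * (∫ p : ℝ × ℝ,
          (if p.1 = p.2 then deriv (deriv φ) p.1
            else (deriv φ p.1 - deriv φ p.2) / (p.1 - p.2)) * ν p.1 * ν p.2) +
          ∫ x : ℝ, deriv φ x * x * ν x) :
    (∫ x : ℝ, x ^ 2 * ν x) = 1 - χ := by
  have hν : Integrable ν := by
    by_contra h
    simp [integral_undef h] at hmass
  have hνν : Integrable (fun p : ℝ × ℝ => ν p.1 * ν p.2) := by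
    simpa [Measure.volume_eq_prod] using hν.mul_prod hν
  have hmass₂ : (∫ p : ℝ × ℝ, ν p.1 * ν p.2) = 1 := by
    rw [Measure.volume_eq_prod, integral_prod_mul, hmass, mul_one]
  have hidentity : ∀ᶠ ε in 𝓝[≠] (0 : ℝ), _ := eventually_nhdsWithin_of_forall fun _ hε =>
    (IsWeakStationaryState.integral_cos_mul hstat hε).symm
  have hlim := tendsto_nhds_unique ((tendsto_integral_cos_mul hν).mono_left nhdsWithin_le_nhds)
    ((((tendsto_integral_cos_mul_sinc_mul hνν).const_mul χ).add
      (tendsto_integral_sinc_mul hmom2)).mono_left nhdsWithin_le_nhds |>.congr' hidentity)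
  rw [hmass, hmass₂] at hlim
  linarith

/-- A weak stationary state of the rescaled one-dimensional modified
Keller–Segel equation with subcritical parameter `0 < χ < 1` has second moment
exactly `1 − χ`. The weak formulation is tested against `C²` functions `φ`
with bounded Lipschitz derivative, with the symmetrized difference quotient
`(φ'(x) − φ'(y))/(x − y)` read as `φ''(x)` on the diagonal. -/
theorem second_moment_of_stationary_state (χ : ℝ) (hχ0 : 0 < χ) (hχ1 : χ < 1)
    (ν : ℝ → ℝ) (hν0 : ∀ x, 0 ≤ ν x)
    (hmass : (∫ x : ℝ, ν x) = 1)
    (hmom2 : Integrable (fun x : ℝ => x ^ 2 * ν x))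
    (hstat : ∀ φ : ℝ → ℝ, ContDiff ℝ 2 φ →
      (∃ C : ℝ, ∀ x, |deriv φ x| ≤ C) →
      (∃ L : NNReal, LipschitzWith L (deriv φ)) →
      (∫ x : ℝ, deriv (deriv φ) x * ν x) =
        χ * (∫ p : ℝ × ℝ,
          (if p.1 = p.2 then deriv (deriv φ) p.1
            else (deriv φ p.1 - deriv φ p.2) / (p.1 - p.2)) * ν p.1 * ν p.2) +
          ∫ x : ℝ, deriv φ x * x * ν x) :
    (∫ x : ℝ, x ^ 2 * ν x) = 1 - χ :=
  second_moment_of_stationary_state_general χ ν hmass hmom2 hstat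
end
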